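/- arXiv:2407.08393 — 2 statements merged into one kernel-verified Lean document; each statement's English description precedes it below -/
import Mathlib

section
/- Let 1<p<∞, α,β∈ℝ, R>0. For all complex-valued f∈C_0^∞({0<|x'|<R}) the identity holds: |(β+p)/p|^p ∫ |f|^p/(|x'|^{α+p}(log(R/|x'|))^{β+p+1}) dx = ∫ |x'·∇_k f|^p/(|x'|^{α+p}(log(R/|x'|))^{β+1}) dx − (k−α−p)((β+p)/p)|(β+p)/p|^{p−2} ∫ |f|^p/(|x'|^{α+p}(log(R/|x'|))^{β+p}) dx − ∫ C_p(ξ,η) dx, where ξ = x'·∇_k f / (|x'|^{(α+p)/p}(log(R/|x'|))^{(β+1)/p}) and η = ξ + ((β+p)/p) f/(|x'|^{(α+p)/p}(log(R/|x'|))^{(β+p+1)/p}). -/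
open MeasureTheory

noncomputable section

/-- The functional `C_p(ξ,η) = |ξ|^p − |ξ−η|^p − p|ξ−η|^{p−2} Re((ξ−η)·conj η)`. -/
def Cp (p : ℝ) (ξ η : ℂ) : ℝ :=
  ‖ξ‖ ^ p - ‖ξ - η‖ ^ p - p * ‖ξ - η‖ ^ (p - 2) * ((ξ - η) * (starRingEnd ℂ) η).re

lemma rpow_sub_two_mul_sq {t : ℝ} (ht : 0 ≤ t) {p : ℝ} (hp : p ≠ 0) :
    t ^ (p - 2) * t ^ (2 : ℕ) = t ^ p := by
  rcases eq_or_lt_of_le ht with h | h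
  · simp [← h, Real.zero_rpow hp]
  · rw [← Real.rpow_natCast t 2, ← Real.rpow_add h]
    norm_num

lemma cp_eval {p : ℝ} (hp : 1 < p) (c : ℝ) {v w : ℝ} (hv : 0 < v) (hw : 0 < w) (D F : ℂ) :
    Cp p (D / (v : ℂ)) (D / (v : ℂ) + (c : ℂ) * F / (w : ℂ)) =
      ‖D‖ ^ p / v ^ p - |c| ^ p * ‖F‖ ^ p / w ^ p
      + p * c * |c| ^ (p - 2) * (‖F‖ ^ (p - 2) * ((starRingEnd ℂ) F * D).re) / (w ^ (p - 1) * v)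
      + p * c ^ 2 * |c| ^ (p - 2) * ‖F‖ ^ p / w ^ p := by
  have hpne : p ≠ 0 := by positivity
  have hvne : (v : ℂ) ≠ 0 := by exact_mod_cast hv.ne'
  have hwne : (w : ℂ) ≠ 0 := by exact_mod_cast hw.ne'
  have h1 : D / (v : ℂ) - (D / (v : ℂ) + (c : ℂ) * F / (w : ℂ)) = -((c : ℂ) * F / (w : ℂ)) := by
    ring
  have hn1 : ‖D / (v : ℂ)‖ = ‖D‖ / v := by
    rw [norm_div, Complex.norm_real, Real.norm_eq_abs, abs_of_pos hv]
  have hn2 : ‖-((c : ℂ) * F / (w : ℂ))‖ = |c| * ‖F‖ / w := by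
    rw [norm_neg, norm_div, norm_mul, Complex.norm_real, Complex.norm_real,
      Real.norm_eq_abs, Real.norm_eq_abs, abs_of_pos hw]
  -- the re part
  have hprod : (-((c : ℂ) * F / (w : ℂ))) *
      (starRingEnd ℂ) (D / (v : ℂ) + (c : ℂ) * F / (w : ℂ)) =
      (((-(c / (w * v)) : ℝ)) : ℂ) * (F * (starRingEnd ℂ) D)
      + (((-(c ^ 2 / w ^ 2) : ℝ)) : ℂ) * (F * (starRingEnd ℂ) F) := by
    simp only [map_add, map_div₀, map_mul, Complex.conj_ofReal]
    push_cast
    field_simp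
    ring
  have hre : ((-((c : ℂ) * F / (w : ℂ))) *
      (starRingEnd ℂ) (D / (v : ℂ) + (c : ℂ) * F / (w : ℂ))).re =
      -(c / (w * v)) * ((starRingEnd ℂ) F * D).re - (c ^ 2 / w ^ 2) * ‖F‖ ^ (2 : ℕ) := by
    rw [hprod]
    simp only [Complex.add_re, Complex.re_ofReal_mul, Complex.mul_conj]
    have h2 : (F * (starRingEnd ℂ) D).re = ((starRingEnd ℂ) F * D).re := by
      simp [Complex.mul_re, Complex.conj_re, Complex.conj_im]
    rw [h2]
    simp only [Complex.normSq_eq_norm_sq, ← Complex.ofReal_pow, Complex.ofReal_re]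
    ring
  rw [Cp, h1, hn1, hn2, hre]
  rw [Real.div_rpow (norm_nonneg D) hv.le,
      Real.div_rpow (by positivity) hw.le,
      Real.div_rpow (by positivity) hw.le,
      Real.mul_rpow (abs_nonneg c) (norm_nonneg F),
      Real.mul_rpow (abs_nonneg c) (norm_nonneg F)]
  have hFp : ‖F‖ ^ (p - 2) * ‖F‖ ^ (2 : ℕ) = ‖F‖ ^ p := rpow_sub_two_mul_sq (norm_nonneg F) hpne
  have hwp : w ^ (p - 2) * w = w ^ (p - 1) := by
    rw [show p - 1 = (p - 2) + 1 by ring, Real.rpow_add hw, Real.rpow_one]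
  have hwp2 : w ^ (p - 2) * w ^ (2 : ℕ) = w ^ p := rpow_sub_two_mul_sq hw.le hpne
  have hcp : |c| ^ (p - 2) * c ^ 2 = |c| ^ p := by
    have := rpow_sub_two_mul_sq (abs_nonneg c) hpne
    rwa [sq_abs c] at this
  have hwpos : (0:ℝ) < w ^ (p-2) := Real.rpow_pos_of_pos hw _
  have hwppos : (0:ℝ) < w ^ p := Real.rpow_pos_of_pos hw _
  have hw1pos : (0:ℝ) < w ^ (p-1) := Real.rpow_pos_of_pos hw _
  have hvppos : (0:ℝ) < v ^ p := Real.rpow_pos_of_pos hv _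
  rw [← hFp, ← hwp, ← hwp2, ← hcp]
  field_simp
  ring


lemma integral_fderiv_apply_eq_zero {E : Type*} [NormedAddCommGroup E] [NormedSpace ℝ E]
    [MeasurableSpace E] {μ : Measure E} [BorelSpace E] [FiniteDimensional ℝ E]
    [μ.IsAddHaarMeasure] {Φ : E → ℝ} (h1 : ContDiff ℝ 1 Φ) (h2 : HasCompactSupport Φ)
    (v : E) : ∫ x, fderiv ℝ Φ x v ∂μ = 0 := by
  have := integral_mul_fderiv_eq_neg_fderiv_mul_of_integrable (μ := μ) (𝕜 := ℝ)
    (f := fun _ => (1:ℝ)) (g := Φ) (v := v) ?_ ?_ ?_ ?_ ?_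
  · simpa [fderiv_fun_const] using this
  · simp [fderiv_fun_const]
  · simp only [one_mul]
    apply Continuous.integrable_of_hasCompactSupport
    · exact (contDiff_one_iff_fderiv.1 h1).2.clm_apply continuous_const
    · exact h2.fderiv_apply ℝ v
  · simpa using h1.continuous.integrable_of_hasCompactSupport h2
  · exact fun x _ => differentiableAt_const (1:ℝ)
  · exact fun x _ => h1.differentiable one_ne_zero x

lemma weight1d {R : ℝ} (s t : ℝ) {r : ℝ} (hr : 0 < r) (hrR : r < R) :
    HasDerivAt (fun u : ℝ => u ^ s * Real.log (R / u) ^ t)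
      (s * r ^ (s - 1) * Real.log (R / r) ^ t - t * r ^ (s - 1) * Real.log (R / r) ^ (t - 1))
      r := by
  have hR : 0 < R := hr.trans hrR
  have hL : 0 < Real.log (R / r) := Real.log_pos ((one_lt_div hr).2 hrR)
  have h1 : HasDerivAt (fun u : ℝ => u ^ s) (s * r ^ (s - 1)) r := by
    simpa using Real.hasDerivAt_rpow_const (p := s) (Or.inl hr.ne')
  have h2 : HasDerivAt (fun u : ℝ => R / u) (-(R / r ^ 2)) r := by
    simpa [div_eq_mul_inv] using (hasDerivAt_inv hr.ne').const_mul R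
  have h3 : HasDerivAt (fun u : ℝ => Real.log (R / u)) (-(1 / r)) r := by
    have := (Real.hasDerivAt_log (div_pos hR hr).ne').comp r h2
    refine HasDerivAt.congr_deriv this ?_
    field_simp
  have h4 : HasDerivAt (fun u : ℝ => Real.log (R / u) ^ t)
      (t * Real.log (R / r) ^ (t - 1) * (-(1 / r))) r := by
    have h5 : HasDerivAt (fun z : ℝ => z ^ t) (t * Real.log (R / r) ^ (t - 1))
        (Real.log (R / r)) := Real.hasDerivAt_rpow_const (Or.inl hL.ne')
    exact h5.comp r h3
  have h6 := h1.mul h4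
  refine HasDerivAt.congr_deriv h6 ?_
  have h7 : r ^ (s - 1) * r = r ^ s := by
    rw [← Real.rpow_add_one hr.ne']
    norm_num
  rw [← h7]
  field_simp
  ring


abbrev LHSp (k m : ℕ) := EuclideanSpace ℝ (Fin k) × EuclideanSpace ℝ (Fin m)

set_option maxHeartbeats 2000000 in
/-- Logarithmic cylindrical `L^p`-Hardy identity on `{0 < |x'| < R}`. -/
theorem log_hardy_identity (k m : ℕ) (hk : 1 ≤ k) (p α β R : ℝ) (hp : 1 < p) (hR : 0 < R)
    (f : EuclideanSpace ℝ (Fin k) × EuclideanSpace ℝ (Fin m) → ℂ)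
    (hf : ContDiff ℝ (⊤ : ℕ∞) f) (hsupp : HasCompactSupport f)
    (h0 : ∀ x : EuclideanSpace ℝ (Fin k) × EuclideanSpace ℝ (Fin m),
      x ∈ tsupport f → x.1 ≠ 0 ∧ ‖x.1‖ < R) :
    |(β + p) / p| ^ p *
      ∫ x in {x : EuclideanSpace ℝ (Fin k) × EuclideanSpace ℝ (Fin m) |
          0 < ‖x.1‖ ∧ ‖x.1‖ < R},
        ‖f x‖ ^ p / (‖x.1‖ ^ (α + p) * Real.log (R / ‖x.1‖) ^ (β + p + 1)) =
      (∫ x in {x : EuclideanSpace ℝ (Fin k) × EuclideanSpace ℝ (Fin m) |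
          0 < ‖x.1‖ ∧ ‖x.1‖ < R},
        ‖fderiv ℝ f x (x.1, 0)‖ ^ p /
          (‖x.1‖ ^ (α + p) * Real.log (R / ‖x.1‖) ^ (β + 1))) -
      ((k : ℝ) - α - p) * ((β + p) / p) * |(β + p) / p| ^ (p - 2) *
        (∫ x in {x : EuclideanSpace ℝ (Fin k) × EuclideanSpace ℝ (Fin m) |
            0 < ‖x.1‖ ∧ ‖x.1‖ < R},
          ‖f x‖ ^ p / (‖x.1‖ ^ (α + p) * Real.log (R / ‖x.1‖) ^ (β + p))) -
      ∫ x in {x : EuclideanSpace ℝ (Fin k) × EuclideanSpace ℝ (Fin m) |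
          0 < ‖x.1‖ ∧ ‖x.1‖ < R},
        Cp p
          (fderiv ℝ f x (x.1, 0) /
            (↑(‖x.1‖ ^ ((α + p) / p) * Real.log (R / ‖x.1‖) ^ ((β + 1) / p)) : ℂ))
          (fderiv ℝ f x (x.1, 0) /
            (↑(‖x.1‖ ^ ((α + p) / p) * Real.log (R / ‖x.1‖) ^ ((β + 1) / p)) : ℂ) +
           (↑((β + p) / p) : ℂ) * f x /
            (↑(‖x.1‖ ^ ((α + p) / p) * Real.log (R / ‖x.1‖) ^ ((β + p + 1) / p)) : ℂ)) := by
  have hp0 : (0:ℝ) < p := lt_trans one_pos hp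
  have hpne : p ≠ 0 := hp0.ne'
  haveI : (volume : Measure (LHSp k m)).IsAddHaarMeasure :=
    MeasureTheory.Measure.prod.instIsAddHaarMeasure _ _
  set S := {x : EuclideanSpace ℝ (Fin k) × EuclideanSpace ℝ (Fin m) |
      0 < ‖x.1‖ ∧ ‖x.1‖ < R} with hSdef
  have hSopen : IsOpen S := by
    have : S = {x : LHSp k m | 0 < ‖x.1‖} ∩ {x : LHSp k m | ‖x.1‖ < R} := rfl
    rw [this]
    exact (isOpen_lt continuous_const continuous_fst.norm).inter
      (isOpen_lt continuous_fst.norm continuous_const)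
  have hKS : tsupport f ⊆ S := fun x hx => ⟨norm_pos_iff.2 (h0 x hx).1, (h0 x hx).2⟩
  have hfz : ∀ x ∉ tsupport f, f x = 0 := fun x hx => image_eq_zero_of_notMem_tsupport hx
  have hdfz : ∀ x ∉ tsupport f, fderiv ℝ f x = 0 := by
    intro x hx
    by_contra h
    exact hx (support_fderiv_subset ℝ (Function.mem_support.2 h))
  have hgsub : tsupport (fun y : LHSp k m => ‖f y‖ ^ p) ⊆ tsupport f := by
    apply closure_mono
    intro y hy
    simp only [Function.mem_support] at hy ⊢
    intro h
    exact hy (by simp [h, Real.zero_rpow hpne])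
  have hgz : ∀ x ∉ tsupport f, fderiv ℝ (fun y : LHSp k m => ‖f y‖ ^ p) x = 0 := by
    intro x hx
    by_contra h
    exact hx (hgsub (support_fderiv_subset ℝ (Function.mem_support.2 h)))
  -- zero off S
  have hA0 : ∀ x ∉ S,
      ‖f x‖ ^ p / (‖x.1‖ ^ (α + p) * Real.log (R / ‖x.1‖) ^ (β + p + 1)) = 0 := by
    intro x hx
    simp [hfz x (fun h => hx (hKS h)), Real.zero_rpow hpne]
  have hD0 : ∀ x ∉ S,
      ‖f x‖ ^ p / (‖x.1‖ ^ (α + p) * Real.log (R / ‖x.1‖) ^ (β + p)) = 0 := by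
    intro x hx
    simp [hfz x (fun h => hx (hKS h)), Real.zero_rpow hpne]
  have hB0 : ∀ x ∉ S,
      ‖fderiv ℝ f x (x.1, 0)‖ ^ p /
        (‖x.1‖ ^ (α + p) * Real.log (R / ‖x.1‖) ^ (β + 1)) = 0 := by
    intro x hx
    simp [hdfz x (fun h => hx (hKS h)), Real.zero_rpow hpne]
  have hE0 : ∀ x ∉ S,
      Cp p
        (fderiv ℝ f x (x.1, 0) /
          (↑(‖x.1‖ ^ ((α + p) / p) * Real.log (R / ‖x.1‖) ^ ((β + 1) / p)) : ℂ))
        (fderiv ℝ f x (x.1, 0) /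
          (↑(‖x.1‖ ^ ((α + p) / p) * Real.log (R / ‖x.1‖) ^ ((β + 1) / p)) : ℂ) +
         (↑((β + p) / p) : ℂ) * f x /
          (↑(‖x.1‖ ^ ((α + p) / p) * Real.log (R / ‖x.1‖) ^ ((β + p + 1) / p)) : ℂ)) = 0 := by
    intro x hx
    simp [Cp, hdfz x (fun h => hx (hKS h)), hfz x (fun h => hx (hKS h)),
      Real.zero_rpow hpne]
  rw [MeasureTheory.setIntegral_eq_integral_of_forall_compl_eq_zero hA0,
      MeasureTheory.setIntegral_eq_integral_of_forall_compl_eq_zero hB0,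
      MeasureTheory.setIntegral_eq_integral_of_forall_compl_eq_zero hD0,
      MeasureTheory.setIntegral_eq_integral_of_forall_compl_eq_zero hE0]
  -- integrability
  have keyInt : ∀ h : LHSp k m → ℝ, (∀ x ∈ S, ContinuousAt h x) →
      (∀ x ∉ tsupport f, h x = 0) → Integrable h volume := by
    intro h h1 h2
    have hcont : Continuous h := by
      rw [continuous_iff_continuousAt]
      intro x
      by_cases hx : x ∈ tsupport f
      · exact h1 x (hKS hx)
      · have hev : h =ᶠ[nhds x] fun _ => 0 := by
          filter_upwards [(isClosed_tsupport f).isOpen_compl.mem_nhds hx] with y hy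
          exact h2 y hy
        exact ContinuousAt.congr continuousAt_const hev.symm
    exact hcont.integrable_of_hasCompactSupport (HasCompactSupport.intro hsupp h2)
  have hLpos : ∀ x : LHSp k m, x ∈ S → 0 < Real.log (R / ‖x.1‖) := by
    intro x hx
    exact Real.log_pos ((one_lt_div hx.1).2 hx.2)
  have contDen : ∀ t : ℝ, ∀ x : LHSp k m, x ∈ S →
      ContinuousAt (fun y : LHSp k m => ‖y.1‖ ^ (α + p) * Real.log (R / ‖y.1‖) ^ t) x ∧
      0 < ‖x.1‖ ^ (α + p) * Real.log (R / ‖x.1‖) ^ t := by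
    intro t x hx
    have hr : 0 < ‖x.1‖ := hx.1
    have hL : 0 < Real.log (R / ‖x.1‖) := hLpos x hx
    constructor
    · apply ContinuousAt.mul
      · exact (continuous_fst.norm.continuousAt).rpow_const (Or.inl hr.ne')
      · exact ((continuousAt_const.div continuous_fst.norm.continuousAt hr.ne').log
          (div_pos hR hr).ne').rpow_const (Or.inl hL.ne')
    · exact mul_pos (Real.rpow_pos_of_pos hr _) (Real.rpow_pos_of_pos hL _)
  have intA : Integrable (fun x : LHSp k m =>
      ‖f x‖ ^ p / (‖x.1‖ ^ (α + p) * Real.log (R / ‖x.1‖) ^ (β + p + 1))) volume := by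
    apply keyInt
    · intro x hx
      exact ((hf.continuous.norm.rpow_const (fun y => Or.inr hp0.le)).continuousAt).div
        (contDen _ x hx).1 (contDen _ x hx).2.ne'
    · intro x hx
      simp [hfz x hx, Real.zero_rpow hpne]
  have intB : Integrable (fun x : LHSp k m =>
      ‖fderiv ℝ f x (x.1, 0)‖ ^ p /
        (‖x.1‖ ^ (α + p) * Real.log (R / ‖x.1‖) ^ (β + 1))) volume := by
    apply keyInt
    · intro x hx
      refine ContinuousAt.div ?_ (contDen _ x hx).1 (contDen _ x hx).2.ne'
      exact (((hf.continuous_fderiv (by simp)).clm_apply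
        (continuous_fst.prodMk continuous_const)).norm.rpow_const
        (fun y => Or.inr hp0.le)).continuousAt
    · intro x hx
      simp [hdfz x hx, Real.zero_rpow hpne]
  have intD : Integrable (fun x : LHSp k m =>
      ‖f x‖ ^ p / (‖x.1‖ ^ (α + p) * Real.log (R / ‖x.1‖) ^ (β + p))) volume := by
    apply keyInt
    · intro x hx
      exact ((hf.continuous.norm.rpow_const (fun y => Or.inr hp0.le)).continuousAt).div
        (contDen _ x hx).1 (contDen _ x hx).2.ne'
    · intro x hx
      simp [hfz x hx, Real.zero_rpow hpne]
  have intG : Integrable (fun x : LHSp k m =>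
      fderiv ℝ (fun y : LHSp k m => ‖f y‖ ^ p) x (x.1, 0) /
        (‖x.1‖ ^ (α + p) * Real.log (R / ‖x.1‖) ^ (β + p))) volume := by
    have hg1 : ContDiff ℝ 1 (fun y : LHSp k m => ‖f y‖ ^ p) := (hf.of_le (by simp)).norm_rpow hp
    apply keyInt
    · intro x hx
      refine ContinuousAt.div ?_ (contDen _ x hx).1 (contDen _ x hx).2.ne'
      exact (((contDiff_one_iff_fderiv.mp hg1).2).clm_apply
        (continuous_fst.prodMk continuous_const)).continuousAt
    · intro x hx
      simp only [hgz x hx, ContinuousLinearMap.zero_apply, zero_div]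
  -- pointwise identity
  have hDgApply : ∀ x : LHSp k m,
      fderiv ℝ (fun y : LHSp k m => ‖f y‖ ^ p) x (x.1, 0) =
      p * (‖f x‖ ^ (p - 2) * ((starRingEnd ℂ) (f x) * fderiv ℝ f x (x.1, 0)).re) := by
    intro x
    have hgd : HasFDerivAt (fun y : LHSp k m => ‖f y‖ ^ p)
        (((p * ‖f x‖ ^ (p - 2)) • innerSL ℝ (f x)).comp (fderiv ℝ f x)) x :=
      (hasFDerivAt_norm_rpow (f x) hp).comp x ((hf.differentiable (by simp) x).hasFDerivAt)
    rw [hgd.fderiv]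
    simp only [ContinuousLinearMap.coe_comp', Function.comp_apply,
      ContinuousLinearMap.smul_apply, innerSL_apply_apply, smul_eq_mul]
    rw [Complex.inner]
    ring
  have star : ∀ x : LHSp k m,
      Cp p
        (fderiv ℝ f x (x.1, 0) /
          (↑(‖x.1‖ ^ ((α + p) / p) * Real.log (R / ‖x.1‖) ^ ((β + 1) / p)) : ℂ))
        (fderiv ℝ f x (x.1, 0) /
          (↑(‖x.1‖ ^ ((α + p) / p) * Real.log (R / ‖x.1‖) ^ ((β + 1) / p)) : ℂ) +
         (↑((β + p) / p) : ℂ) * f x /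
          (↑(‖x.1‖ ^ ((α + p) / p) * Real.log (R / ‖x.1‖) ^ ((β + p + 1) / p)) : ℂ)) =
      ‖fderiv ℝ f x (x.1, 0)‖ ^ p /
          (‖x.1‖ ^ (α + p) * Real.log (R / ‖x.1‖) ^ (β + 1))
        - |(β + p) / p| ^ p *
            (‖f x‖ ^ p / (‖x.1‖ ^ (α + p) * Real.log (R / ‖x.1‖) ^ (β + p + 1)))
        + ((β + p) / p) * |(β + p) / p| ^ (p - 2) *
            (fderiv ℝ (fun y : LHSp k m => ‖f y‖ ^ p) x (x.1, 0) /
              (‖x.1‖ ^ (α + p) * Real.log (R / ‖x.1‖) ^ (β + p)))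
        + p * ((β + p) / p) ^ 2 * |(β + p) / p| ^ (p - 2) *
            (‖f x‖ ^ p / (‖x.1‖ ^ (α + p) * Real.log (R / ‖x.1‖) ^ (β + p + 1))) := by
    intro x
    by_cases hx : x ∈ S
    · have hr : 0 < ‖x.1‖ := hx.1
      have hL : 0 < Real.log (R / ‖x.1‖) := hLpos x hx
      have hv : 0 < ‖x.1‖ ^ ((α + p) / p) * Real.log (R / ‖x.1‖) ^ ((β + 1) / p) :=
        mul_pos (Real.rpow_pos_of_pos hr _) (Real.rpow_pos_of_pos hL _)
      have hw : 0 < ‖x.1‖ ^ ((α + p) / p) * Real.log (R / ‖x.1‖) ^ ((β + p + 1) / p) :=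
        mul_pos (Real.rpow_pos_of_pos hr _) (Real.rpow_pos_of_pos hL _)
      rw [cp_eval hp ((β + p) / p) hv hw (fderiv ℝ f x (x.1, 0)) (f x)]
      have hvp : (‖x.1‖ ^ ((α + p) / p) * Real.log (R / ‖x.1‖) ^ ((β + 1) / p)) ^ p =
          ‖x.1‖ ^ (α + p) * Real.log (R / ‖x.1‖) ^ (β + 1) := by
        rw [Real.mul_rpow (Real.rpow_nonneg (norm_nonneg _) _) (Real.rpow_nonneg hL.le _),
          ← Real.rpow_mul (norm_nonneg _), ← Real.rpow_mul hL.le,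
          div_mul_cancel₀ _ hpne, div_mul_cancel₀ _ hpne]
      have hwp : (‖x.1‖ ^ ((α + p) / p) * Real.log (R / ‖x.1‖) ^ ((β + p + 1) / p)) ^ p =
          ‖x.1‖ ^ (α + p) * Real.log (R / ‖x.1‖) ^ (β + p + 1) := by
        rw [Real.mul_rpow (Real.rpow_nonneg (norm_nonneg _) _) (Real.rpow_nonneg hL.le _),
          ← Real.rpow_mul (norm_nonneg _), ← Real.rpow_mul hL.le,
          div_mul_cancel₀ _ hpne, div_mul_cancel₀ _ hpne]
      have hwv : (‖x.1‖ ^ ((α + p) / p) * Real.log (R / ‖x.1‖) ^ ((β + p + 1) / p)) ^ (p - 1) *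
          (‖x.1‖ ^ ((α + p) / p) * Real.log (R / ‖x.1‖) ^ ((β + 1) / p)) =
          ‖x.1‖ ^ (α + p) * Real.log (R / ‖x.1‖) ^ (β + p) := by
        rw [Real.mul_rpow (Real.rpow_nonneg (norm_nonneg _) _) (Real.rpow_nonneg hL.le _),
          ← Real.rpow_mul (norm_nonneg _), ← Real.rpow_mul hL.le,
          mul_mul_mul_comm, ← Real.rpow_add hr, ← Real.rpow_add hL,
          show (α + p) / p * (p - 1) + (α + p) / p = α + p by field_simp; ring,
          show (β + p + 1) / p * (p - 1) + (β + 1) / p = β + p by field_simp; ring]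
      rw [hvp, hwp, hwv, hDgApply x]
      ring
    · have hxt : x ∉ tsupport f := fun h => hx (hKS h)
      rw [hdfz x hxt, hfz x hxt, hgz x hxt]
      simp [Cp, Real.zero_rpow hpne]

  have hE : (∫ x : LHSp k m,
      Cp p
        (fderiv ℝ f x (x.1, 0) /
          (↑(‖x.1‖ ^ ((α + p) / p) * Real.log (R / ‖x.1‖) ^ ((β + 1) / p)) : ℂ))
        (fderiv ℝ f x (x.1, 0) /
          (↑(‖x.1‖ ^ ((α + p) / p) * Real.log (R / ‖x.1‖) ^ ((β + 1) / p)) : ℂ) +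
         (↑((β + p) / p) : ℂ) * f x /
          (↑(‖x.1‖ ^ ((α + p) / p) * Real.log (R / ‖x.1‖) ^ ((β + p + 1) / p)) : ℂ))) =
      (∫ x : LHSp k m, ‖fderiv ℝ f x (x.1, 0)‖ ^ p /
          (‖x.1‖ ^ (α + p) * Real.log (R / ‖x.1‖) ^ (β + 1)))
      - |(β + p) / p| ^ p * (∫ x : LHSp k m,
          ‖f x‖ ^ p / (‖x.1‖ ^ (α + p) * Real.log (R / ‖x.1‖) ^ (β + p + 1)))
      + ((β + p) / p) * |(β + p) / p| ^ (p - 2) * (∫ x : LHSp k m,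
          fderiv ℝ (fun y : LHSp k m => ‖f y‖ ^ p) x (x.1, 0) /
            (‖x.1‖ ^ (α + p) * Real.log (R / ‖x.1‖) ^ (β + p)))
      + p * ((β + p) / p) ^ 2 * |(β + p) / p| ^ (p - 2) * (∫ x : LHSp k m,
          ‖f x‖ ^ p / (‖x.1‖ ^ (α + p) * Real.log (R / ‖x.1‖) ^ (β + p + 1))) := by
    rw [MeasureTheory.integral_congr_ae (Filter.Eventually.of_forall star)]
    rw [integral_add, integral_add, integral_sub intB (intA.const_mul _),
        integral_const_mul, integral_const_mul, integral_const_mul]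
    · exact intB.sub (intA.const_mul _)
    · exact intG.const_mul _
    · exact (intB.sub (intA.const_mul _)).add (intG.const_mul _)
    · exact intA.const_mul _
  have hIBP : (∫ x : LHSp k m,
        fderiv ℝ (fun y : LHSp k m => ‖f y‖ ^ p) x (x.1, 0) /
          (‖x.1‖ ^ (α + p) * Real.log (R / ‖x.1‖) ^ (β + p)))
      + ((k : ℝ) - α - p) * (∫ x : LHSp k m,
          ‖f x‖ ^ p / (‖x.1‖ ^ (α + p) * Real.log (R / ‖x.1‖) ^ (β + p)))
      + (β + p) * (∫ x : LHSp k m,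
          ‖f x‖ ^ p / (‖x.1‖ ^ (α + p) * Real.log (R / ‖x.1‖) ^ (β + p + 1))) = 0 := by
    -- derivative of the norm of the first component
    have hNorm : ∀ x : LHSp k m, x.1 ≠ 0 →
        ∃ Ψ : LHSp k m →L[ℝ] ℝ, HasFDerivAt (fun y : LHSp k m => ‖y.1‖) Ψ x ∧
          Ψ (x.1, 0) = ‖x.1‖ := by
      intro x hx1
      have hq : HasFDerivAt (fun y : LHSp k m => ‖y.1‖ ^ 2)
          (2 • (innerSL ℝ x.1).comp (ContinuousLinearMap.fst ℝ _ _)) x :=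
        (hasFDerivAt_fst).norm_sq
      have hrne : ‖x.1‖ ^ 2 ≠ 0 := pow_ne_zero _ (norm_ne_zero_iff.2 hx1)
      have h2 := (Real.hasDerivAt_sqrt hrne).comp_hasFDerivAt x hq
      have h3 : HasFDerivAt (fun y : LHSp k m => ‖y.1‖)
          ((1 / (2 * Real.sqrt (‖x.1‖ ^ 2))) •
            (2 • (innerSL ℝ x.1).comp (ContinuousLinearMap.fst ℝ _ _))) x := by
        apply h2.congr_of_eventuallyEq
        filter_upwards with y
        simp [Real.sqrt_sq (norm_nonneg _)]
      refine ⟨_, h3, ?_⟩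
      have hs : Real.sqrt (‖x.1‖ ^ 2) = ‖x.1‖ := Real.sqrt_sq (norm_nonneg _)
      have hr0 : ‖x.1‖ ≠ 0 := norm_ne_zero_iff.2 hx1
      simp only [ContinuousLinearMap.smul_apply, ContinuousLinearMap.coe_smul',
        Pi.smul_apply, ContinuousLinearMap.coe_comp', Function.comp_apply,
        ContinuousLinearMap.coe_fst', innerSL_apply_apply, smul_eq_mul, hs]
      rw [real_inner_self_eq_norm_sq]
      field_simp
      ring
    -- derivative of the weights
    have hW : ∀ s t : ℝ, ∀ x : LHSp k m, x ∈ S →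
        ∃ Ψ : LHSp k m →L[ℝ] ℝ,
          HasFDerivAt (fun y : LHSp k m => ‖y.1‖ ^ s * Real.log (R / ‖y.1‖) ^ t) Ψ x ∧
          Ψ (x.1, 0) = s * ‖x.1‖ ^ s * Real.log (R / ‖x.1‖) ^ t
            - t * ‖x.1‖ ^ s * Real.log (R / ‖x.1‖) ^ (t - 1) := by
      intro s t x hx
      obtain ⟨Ψn, hΨn, hval⟩ := hNorm x (norm_pos_iff.1 hx.1)
      have h1d := weight1d (R := R) s t hx.1 hx.2
      refine ⟨_, (h1d.comp_hasFDerivAt x hΨn).congr_of_eventuallyEq ?_, ?_⟩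
      · filter_upwards with y
        rfl
      · simp only [ContinuousLinearMap.smul_apply, hval, smul_eq_mul]
        have h7 : ‖x.1‖ ^ (s - 1) * ‖x.1‖ = ‖x.1‖ ^ s := by
          rw [← Real.rpow_add_one (ne_of_gt hx.1)]
          norm_num
        rw [← h7]
        ring
    set Φ : Fin k → LHSp k m → ℝ := fun i => S.indicator
      (fun y => y.1 i *
        (‖f y‖ ^ p * (‖y.1‖ ^ (-(α + p)) * Real.log (R / ‖y.1‖) ^ (-(β + p))))) with hΦdef
    have hΦz : ∀ i, ∀ y, y ∉ tsupport f → Φ i y = 0 := by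
      intro i y hy
      rw [hΦdef]
      simp only [Set.indicator_apply]
      split
      · simp [hfz y hy, Real.zero_rpow hpne]
      · rfl
    have hΦev : ∀ i, ∀ x ∈ S, Φ i =ᶠ[nhds x]
        fun y => y.1 i *
          (‖f y‖ ^ p * (‖y.1‖ ^ (-(α + p)) * Real.log (R / ‖y.1‖) ^ (-(β + p)))) := by
      intro i x hx
      filter_upwards [hSopen.mem_nhds hx] with y hy
      rw [hΦdef]
      exact Set.indicator_of_mem hy _
    have hΦ0ev : ∀ i, ∀ x, x ∉ tsupport f → Φ i =ᶠ[nhds x] fun _ => 0 := by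
      intro i x hx
      filter_upwards [(isClosed_tsupport f).isOpen_compl.mem_nhds hx] with y hy
      exact hΦz i y hy
    have hg1 : ContDiff ℝ 1 (fun y : LHSp k m => ‖f y‖ ^ p) := (hf.of_le (by simp)).norm_rpow hp
    have hVc1 : ∀ x ∈ S, ContDiffAt ℝ 1
        (fun y : LHSp k m => ‖y.1‖ ^ (-(α + p)) * Real.log (R / ‖y.1‖) ^ (-(β + p))) x := by
      intro x hx
      have hr : 0 < ‖x.1‖ := hx.1
      have hL : 0 < Real.log (R / ‖x.1‖) := hLpos x hx
      have hnc : ContDiffAt ℝ 1 (fun y : LHSp k m => ‖y.1‖) x :=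
        contDiffAt_fst.norm ℝ (norm_pos_iff.1 hr)
      apply ContDiffAt.mul
      · exact hnc.rpow_const_of_ne hr.ne'
      · exact ((contDiffAt_const.div hnc hr.ne').log (div_pos hR hr).ne').rpow_const_of_ne
          hL.ne'
    have hΦC1 : ∀ i, ContDiff ℝ 1 (Φ i) := by
      intro i
      rw [contDiff_iff_contDiffAt]
      intro x
      by_cases hx : x ∈ S
      · apply ContDiffAt.congr_of_eventuallyEq ?_ (hΦev i x hx)
        apply ContDiffAt.mul
        · exact (((EuclideanSpace.proj (𝕜 := ℝ) i).comp
            (ContinuousLinearMap.fst ℝ (EuclideanSpace ℝ (Fin k))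
              (EuclideanSpace ℝ (Fin m)))).contDiff.of_le le_top).contDiffAt
        · exact (hg1.contDiffAt).mul (hVc1 x hx)
      · have hxt : x ∉ tsupport f := fun h => hx (hKS h)
        exact contDiffAt_const.congr_of_eventuallyEq (hΦ0ev i x hxt)
    have hΦcs : ∀ i, HasCompactSupport (Φ i) :=
      fun i => HasCompactSupport.intro hsupp (hΦz i)
    -- the pointwise divergence identity
    have hsum : ∀ x : LHSp k m,
        (∑ i : Fin k, fderiv ℝ (Φ i) x
          (EuclideanSpace.single i (1:ℝ), (0 : EuclideanSpace ℝ (Fin m)))) =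
        fderiv ℝ (fun y : LHSp k m => ‖f y‖ ^ p) x (x.1, 0) /
            (‖x.1‖ ^ (α + p) * Real.log (R / ‖x.1‖) ^ (β + p))
          + ((k : ℝ) - α - p) *
              (‖f x‖ ^ p / (‖x.1‖ ^ (α + p) * Real.log (R / ‖x.1‖) ^ (β + p)))
          + (β + p) *
              (‖f x‖ ^ p / (‖x.1‖ ^ (α + p) * Real.log (R / ‖x.1‖) ^ (β + p + 1))) := by
      intro x
      by_cases hx : x ∈ S
      · have hr : 0 < ‖x.1‖ := hx.1
        have hL : 0 < Real.log (R / ‖x.1‖) := hLpos x hx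
        obtain ⟨Ψ, hΨ, hΨval⟩ := hW (-(α + p)) (-(β + p)) x hx
        have hgd : HasFDerivAt (fun y : LHSp k m => ‖f y‖ ^ p)
            (((p * ‖f x‖ ^ (p - 2)) • innerSL ℝ (f x)).comp (fderiv ℝ f x)) x :=
          (hasFDerivAt_norm_rpow (f x) hp).comp x ((hf.differentiable (by simp) x).hasFDerivAt)
        have hPd := hgd.mul hΨ
        have hΦd : ∀ i : Fin k, HasFDerivAt (Φ i)
            ((x.1 i) • (‖f x‖ ^ p • Ψ +
                (‖x.1‖ ^ (-(α + p)) * Real.log (R / ‖x.1‖) ^ (-(β + p))) •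
                  (((p * ‖f x‖ ^ (p - 2)) • innerSL ℝ (f x)).comp (fderiv ℝ f x)))
              + (‖f x‖ ^ p *
                  (‖x.1‖ ^ (-(α + p)) * Real.log (R / ‖x.1‖) ^ (-(β + p)))) •
                ((EuclideanSpace.proj i).comp
                  (ContinuousLinearMap.fst ℝ (EuclideanSpace ℝ (Fin k))
                    (EuclideanSpace ℝ (Fin m))))) x := by
          intro i
          have hproj : HasFDerivAt (fun y : LHSp k m => y.1 i)
              ((EuclideanSpace.proj i).comp
                (ContinuousLinearMap.fst ℝ (EuclideanSpace ℝ (Fin k))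
                  (EuclideanSpace ℝ (Fin m)))) x :=
            (((EuclideanSpace.proj (𝕜 := ℝ) i).comp
              (ContinuousLinearMap.fst ℝ (EuclideanSpace ℝ (Fin k))
                (EuclideanSpace ℝ (Fin m)))).hasFDerivAt).congr_of_eventuallyEq
              (Filter.Eventually.of_forall fun y => rfl)
          exact (hproj.mul hPd).congr_of_eventuallyEq (hΦev i x hx)
        have happ : ∀ i : Fin k, fderiv ℝ (Φ i) x
            (EuclideanSpace.single i (1:ℝ), (0 : EuclideanSpace ℝ (Fin m))) =
            x.1 i * ((‖f x‖ ^ p • Ψ +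
                (‖x.1‖ ^ (-(α + p)) * Real.log (R / ‖x.1‖) ^ (-(β + p))) •
                  (((p * ‖f x‖ ^ (p - 2)) • innerSL ℝ (f x)).comp (fderiv ℝ f x)))
              (EuclideanSpace.single i (1:ℝ), (0 : EuclideanSpace ℝ (Fin m))))
            + (‖f x‖ ^ p *
                (‖x.1‖ ^ (-(α + p)) * Real.log (R / ‖x.1‖) ^ (-(β + p)))) := by
          intro i
          rw [(hΦd i).fderiv]
          simp only [ContinuousLinearMap.add_apply, ContinuousLinearMap.smul_apply,
            ContinuousLinearMap.coe_comp', Function.comp_apply,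
            ContinuousLinearMap.coe_fst', smul_eq_mul]
          simp [EuclideanSpace.single_apply]
        rw [Finset.sum_congr rfl (fun i _ => happ i), Finset.sum_add_distrib]
        have hbasis : (∑ i : Fin k, x.1 i •
            ((EuclideanSpace.single i (1:ℝ) : EuclideanSpace ℝ (Fin k)),
              (0 : EuclideanSpace ℝ (Fin m))) : LHSp k m) = (x.1, 0) := by
          have hb : ∑ i, x.1 i • EuclideanSpace.single i (1:ℝ) = x.1 := by
            simpa [EuclideanSpace.basisFun_apply] using
              (EuclideanSpace.basisFun (Fin k) ℝ).sum_repr x.1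
          apply Prod.ext
          · simp only [Prod.fst_sum, Prod.smul_fst]
            exact hb
          · simp [Prod.snd_sum]
        have hlin : ∑ i : Fin k, x.1 i * ((‖f x‖ ^ p • Ψ +
              (‖x.1‖ ^ (-(α + p)) * Real.log (R / ‖x.1‖) ^ (-(β + p))) •
                (((p * ‖f x‖ ^ (p - 2)) • innerSL ℝ (f x)).comp (fderiv ℝ f x)))
            (EuclideanSpace.single i (1:ℝ), (0 : EuclideanSpace ℝ (Fin m)))) =
            (‖f x‖ ^ p • Ψ +
              (‖x.1‖ ^ (-(α + p)) * Real.log (R / ‖x.1‖) ^ (-(β + p))) •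
                (((p * ‖f x‖ ^ (p - 2)) • innerSL ℝ (f x)).comp (fderiv ℝ f x)))
            (x.1, (0 : EuclideanSpace ℝ (Fin m))) := by
          rw [← hbasis, map_sum]
          congr 1
          ext i
          rw [_root_.map_smul, smul_eq_mul]
        rw [hlin]
        have hDgx : (((p * ‖f x‖ ^ (p - 2)) • innerSL ℝ (f x)).comp (fderiv ℝ f x))
            (x.1, (0 : EuclideanSpace ℝ (Fin m))) =
            fderiv ℝ (fun y : LHSp k m => ‖f y‖ ^ p) x (x.1, 0) := by
          rw [hgd.fderiv]
        have hVinv : ‖x.1‖ ^ (-(α + p)) * Real.log (R / ‖x.1‖) ^ (-(β + p)) =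
            (‖x.1‖ ^ (α + p) * Real.log (R / ‖x.1‖) ^ (β + p))⁻¹ := by
          rw [Real.rpow_neg (norm_nonneg _), Real.rpow_neg hL.le, mul_inv]
        have hVinv2 : ‖x.1‖ ^ (-(α + p)) * Real.log (R / ‖x.1‖) ^ (-(β + p) - 1) =
            (‖x.1‖ ^ (α + p) * Real.log (R / ‖x.1‖) ^ (β + p + 1))⁻¹ := by
          rw [show -(β + p) - 1 = -(β + p + 1) by ring, Real.rpow_neg (norm_nonneg _),
            Real.rpow_neg hL.le, mul_inv]
        simp only [ContinuousLinearMap.add_apply, ContinuousLinearMap.smul_apply,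
          smul_eq_mul, hDgx]
        rw [hΨval]
        rw [Finset.sum_const, Finset.card_univ, Fintype.card_fin, nsmul_eq_mul]
        have hgoal : ‖f x‖ ^ p * (-(α + p) * ‖x.1‖ ^ (-(α + p)) *
              Real.log (R / ‖x.1‖) ^ (-(β + p)) -
            -(β + p) * ‖x.1‖ ^ (-(α + p)) * Real.log (R / ‖x.1‖) ^ (-(β + p) - 1)) =
            ‖f x‖ ^ p * (-(α + p) * (‖x.1‖ ^ (-(α + p)) *
              Real.log (R / ‖x.1‖) ^ (-(β + p))) +
            (β + p) * (‖x.1‖ ^ (-(α + p)) * Real.log (R / ‖x.1‖) ^ (-(β + p) - 1))) := by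
          ring
        rw [hgoal, hVinv, hVinv2]
        have hP1 : (0:ℝ) < ‖x.1‖ ^ (α + p) * Real.log (R / ‖x.1‖) ^ (β + p) :=
          mul_pos (Real.rpow_pos_of_pos hr _) (Real.rpow_pos_of_pos hL _)
        have hP2 : (0:ℝ) < ‖x.1‖ ^ (α + p) * Real.log (R / ‖x.1‖) ^ (β + p + 1) :=
          mul_pos (Real.rpow_pos_of_pos hr _) (Real.rpow_pos_of_pos hL _)
        field_simp
        ring
      · have hxt : x ∉ tsupport f := fun h => hx (hKS h)
        have hz : ∀ i : Fin k, fderiv ℝ (Φ i) x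
            (EuclideanSpace.single i (1:ℝ), (0 : EuclideanSpace ℝ (Fin m))) = 0 := by
          intro i
          rw [(hΦ0ev i x hxt).fderiv_eq, fderiv_fun_const]
          rfl
        rw [Finset.sum_congr rfl (fun i _ => hz i), Finset.sum_const, smul_zero]
        rw [hgz x hxt, hfz x hxt]
        simp [Real.zero_rpow hpne]
    -- integrate
    have hint_i : ∀ i : Fin k, Integrable (fun x : LHSp k m => fderiv ℝ (Φ i) x
        (EuclideanSpace.single i (1:ℝ), (0 : EuclideanSpace ℝ (Fin m)))) volume := by
      intro i
      apply Continuous.integrable_of_hasCompactSupport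
      · exact (contDiff_one_iff_fderiv.mp (hΦC1 i)).2.clm_apply continuous_const
      · exact (hΦcs i).fderiv_apply ℝ _
    have hzero : ∀ i : Fin k, (∫ x : LHSp k m, fderiv ℝ (Φ i) x
        (EuclideanSpace.single i (1:ℝ), (0 : EuclideanSpace ℝ (Fin m)))) = 0 :=
      fun i => integral_fderiv_apply_eq_zero (hΦC1 i) (hΦcs i) _
    have h1 : (∫ x : LHSp k m, ∑ i : Fin k, fderiv ℝ (Φ i) x
        (EuclideanSpace.single i (1:ℝ), (0 : EuclideanSpace ℝ (Fin m)))) = 0 := by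
      rw [integral_finset_sum _ (fun i _ => hint_i i)]
      simp [hzero]
    have h2 := MeasureTheory.integral_congr_ae (μ := (volume : Measure (LHSp k m)))
      (Filter.Eventually.of_forall hsum)
    rw [h1] at h2
    have h3 : (∫ x : LHSp k m,
        (fderiv ℝ (fun y : LHSp k m => ‖f y‖ ^ p) x (x.1, 0) /
            (‖x.1‖ ^ (α + p) * Real.log (R / ‖x.1‖) ^ (β + p))
          + ((k : ℝ) - α - p) *
              (‖f x‖ ^ p / (‖x.1‖ ^ (α + p) * Real.log (R / ‖x.1‖) ^ (β + p)))
          + (β + p) *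
              (‖f x‖ ^ p / (‖x.1‖ ^ (α + p) * Real.log (R / ‖x.1‖) ^ (β + p + 1))))) =
        (∫ x : LHSp k m, fderiv ℝ (fun y : LHSp k m => ‖f y‖ ^ p) x (x.1, 0) /
            (‖x.1‖ ^ (α + p) * Real.log (R / ‖x.1‖) ^ (β + p)))
        + ((k : ℝ) - α - p) * (∫ x : LHSp k m,
            ‖f x‖ ^ p / (‖x.1‖ ^ (α + p) * Real.log (R / ‖x.1‖) ^ (β + p)))
        + (β + p) * (∫ x : LHSp k m,
            ‖f x‖ ^ p / (‖x.1‖ ^ (α + p) * Real.log (R / ‖x.1‖) ^ (β + p + 1))) := by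
      rw [integral_add, integral_add, integral_const_mul, integral_const_mul]
      · exact intG
      · exact intD.const_mul _
      · exact intG.add (intD.const_mul _)
      · exact intA.const_mul _
    rw [← h3, h2]

  have hpc : p * ((β + p) / p) = β + p := by field_simp
  rw [hE]
  linear_combination (((β + p) / p) * |(β + p) / p| ^ (p - 2)) * hIBP +
    (((β + p) / p) * |(β + p) / p| ^ (p - 2) * (∫ x : LHSp k m,
      ‖f x‖ ^ p / (‖x.1‖ ^ (α + p) * Real.log (R / ‖x.1‖) ^ (β + p + 1)))) * hpc
end
end

section
/- Let 1<p<∞, p'=p/(p−1), and 1≤k≤n with k≠p. Then for every complex-valued f∈C_0^∞(ℝⁿ∖{x'=0}): |(k−p)/p| ∫_{ℝⁿ}|f|² dx ≤ (∫_{ℝⁿ} |(x'·∇_k f)/|x'||^p dx)^{1/p} · (∫_{ℝⁿ} |x'|^{p'} |f|^{p'} dx)^{1/p'}. -/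
set_option linter.unusedSectionVars false
set_option linter.unusedVariables false
set_option linter.dupNamespace false
set_option maxHeartbeats 1000000

open MeasureTheory

open Filter Topology Asymptotics

noncomputable section


namespace CylHPW

open MeasureTheory Filter Topology Asymptotics





variable {X : Type*} [NormedAddCommGroup X] [NormedSpace ℝ X]

/-- squared modulus of a complex-valued function -/
def Nf (f : X → ℂ) (x : X) : ℝ := (f x).re * (f x).re + (f x).im * (f x).im

def DN (f : X → ℂ) (x : X) : X →L[ℝ] ℝ :=
  (2 * (f x).re) • (Complex.reCLM.comp (fderiv ℝ f x)) +
  (2 * (f x).im) • (Complex.imCLM.comp (fderiv ℝ f x))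

def DP (f : X → ℂ) (p : ℝ) (x : X) : X →L[ℝ] ℝ :=
  ((p / 2) * Nf f x ^ (p / 2 - 1)) • DN f x

variable {f : X → ℂ} {p : ℝ} {x : X}

lemma Nf_eq (f : X → ℂ) (x : X) : Nf f x = ‖f x‖ ^ (2 : ℕ) := by
  rw [Complex.sq_norm, Complex.normSq_apply, Nf]

lemma Nf_nonneg (f : X → ℂ) (x : X) : 0 ≤ Nf f x := by
  rw [Nf_eq]; positivity

lemma continuous_Nf (hf : Continuous f) : Continuous (Nf f) := by
  unfold Nf; fun_prop

lemma norm_rpow_eq_Nf_rpow (f : X → ℂ) (x : X) :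
    ‖f x‖ ^ p = Nf f x ^ (p / 2) := by
  rw [Nf_eq, ← Real.rpow_natCast ‖f x‖ 2, ← Real.rpow_mul (norm_nonneg _),
    show ((2:ℕ):ℝ) * (p / 2) = p by push_cast; ring]

lemma DN_apply_le (f : X → ℂ) (x w : X) : |DN f x w| ≤ 2 * ‖f x‖ * ‖fderiv ℝ f x w‖ := by
  have h : DN f x w = 2 * (((starRingEnd ℂ) (f x)) * (fderiv ℝ f x w)).re := by
    simp [DN, Complex.mul_re, Complex.conj_re, Complex.conj_im]
    ring
  rw [h, abs_mul, abs_two]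
  have h1 : |(((starRingEnd ℂ) (f x)) * (fderiv ℝ f x w)).re| ≤ ‖f x‖ * ‖fderiv ℝ f x w‖ := by
    calc |(((starRingEnd ℂ) (f x)) * (fderiv ℝ f x w)).re|
        ≤ ‖((starRingEnd ℂ) (f x)) * (fderiv ℝ f x w)‖ := Complex.abs_re_le_norm _
      _ = ‖f x‖ * ‖fderiv ℝ f x w‖ := by
          rw [norm_mul, Complex.norm_conj]
  rw [mul_assoc]
  exact mul_le_mul_of_nonneg_left h1 (by norm_num)

lemma DN_zero (h : f x = 0) : DN f x = 0 := by
  ext w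
  simp [DN, h]

lemma hasFDerivAt_Nf (hf : ContDiff ℝ (⊤ : ℕ∞) f) (x : X) : HasFDerivAt (Nf f) (DN f x) x := by
  have hfd : HasFDerivAt f (fderiv ℝ f x) x := (hf.differentiable (by simp) x).hasFDerivAt
  have ha : HasFDerivAt (fun y => (f y).re) (Complex.reCLM.comp (fderiv ℝ f x)) x :=
    (Complex.reCLM.hasFDerivAt).comp x hfd
  have hb : HasFDerivAt (fun y => (f y).im) (Complex.imCLM.comp (fderiv ℝ f x)) x :=
    (Complex.imCLM.hasFDerivAt).comp x hfd
  have h := (ha.fun_mul ha).fun_add (hb.fun_mul hb)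
  refine h.congr_fderiv ?_
  ext w
  simp [DN]
  ring

lemma continuous_DN (hf : ContDiff ℝ (⊤ : ℕ∞) f) : Continuous (DN f) := by
  have hDf : Continuous (fderiv ℝ f) := hf.continuous_fderiv (by simp)
  have hc : Continuous f := hf.continuous
  apply Continuous.add
  · exact (continuous_const.mul (Complex.continuous_re.comp hc)).smul
      ((ContinuousLinearMap.compL ℝ X ℂ ℝ Complex.reCLM).continuous.comp hDf)
  · exact (continuous_const.mul (Complex.continuous_im.comp hc)).smul
      ((ContinuousLinearMap.compL ℝ X ℂ ℝ Complex.imCLM).continuous.comp hDf)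

lemma Nf_rpow_mul_norm (hp : 1 < p) (x : X) :
    Nf f x ^ (p / 2 - 1) * ‖f x‖ = ‖f x‖ ^ (p - 1) := by
  by_cases hfx : ‖f x‖ = 0
  · rw [hfx, mul_zero, Real.zero_rpow (by linarith)]
  · rw [Nf_eq, ← Real.rpow_natCast ‖f x‖ 2, ← Real.rpow_mul (norm_nonneg _)]
    rw [show ((2:ℕ):ℝ) * (p / 2 - 1) = p - 2 by push_cast; ring,
      ← Real.rpow_add_one hfx (p - 2), show p - 2 + 1 = p - 1 by ring]

lemma DP_apply_le (hp : 1 < p) (x w : X) :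
    |DP f p x w| ≤ p * ‖f x‖ ^ (p - 1) * ‖fderiv ℝ f x w‖ := by
  have hs : (0 : ℝ) ≤ (p / 2) * Nf f x ^ (p / 2 - 1) := by
    have := Nf_nonneg f x; positivity
  calc |DP f p x w| = (p / 2) * Nf f x ^ (p / 2 - 1) * |DN f x w| := by
        simp [DP, abs_mul, abs_of_nonneg hs, abs_of_nonneg (Real.rpow_nonneg (Nf_nonneg f x) _),
          abs_of_nonneg (by linarith : (0:ℝ) ≤ p / 2)]
    _ ≤ (p / 2) * Nf f x ^ (p / 2 - 1) * (2 * ‖f x‖ * ‖fderiv ℝ f x w‖) :=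
        mul_le_mul_of_nonneg_left (DN_apply_le f x w) hs
    _ = p * (Nf f x ^ (p / 2 - 1) * ‖f x‖) * ‖fderiv ℝ f x w‖ := by ring
    _ = p * ‖f x‖ ^ (p - 1) * ‖fderiv ℝ f x w‖ := by rw [Nf_rpow_mul_norm hp]

lemma DP_opNorm_le (hp : 1 < p) (x : X) :
    ‖DP f p x‖ ≤ p * ‖f x‖ ^ (p - 1) * ‖fderiv ℝ f x‖ := by
  refine ContinuousLinearMap.opNorm_le_bound _ (by positivity) fun w => ?_
  calc ‖DP f p x w‖ = |DP f p x w| := rfl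
    _ ≤ p * ‖f x‖ ^ (p - 1) * ‖fderiv ℝ f x w‖ := DP_apply_le hp x w
    _ ≤ p * ‖f x‖ ^ (p - 1) * (‖fderiv ℝ f x‖ * ‖w‖) := by
        refine mul_le_mul_of_nonneg_left ((fderiv ℝ f x).le_opNorm w) (by positivity)
    _ = p * ‖f x‖ ^ (p - 1) * ‖fderiv ℝ f x‖ * ‖w‖ := by ring

lemma DP_zero (h : f x = 0) : DP f p x = 0 := by
  rw [DP, DN_zero h, smul_zero]

lemma hasFDerivAt_norm_rpow (hp : 1 < p) (hf : ContDiff ℝ (⊤ : ℕ∞) f) (x : X) :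
    HasFDerivAt (fun y => ‖f y‖ ^ p) (DP f p x) x := by
  have hfun : (fun y => ‖f y‖ ^ p) = fun y => Nf f y ^ (p / 2) := by
    funext y; exact norm_rpow_eq_Nf_rpow f y
  rw [hfun]
  by_cases hx : f x = 0
  · -- derivative is zero
    rw [DP_zero hx]
    rw [hasFDerivAt_iff_isLittleO_nhds_zero]
    obtain ⟨K, t, ht, hK⟩ := (hf.contDiffAt.of_le (by simp) : ContDiffAt ℝ 1 f x).exists_lipschitzOnWith
    rw [isLittleO_iff]
    intro c hc
    have hxt : x ∈ t := mem_of_mem_nhds ht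
    have htd : Tendsto (fun h : X => x + h) (𝓝 0) (𝓝 x) := by
      simpa using (continuous_add_left x).tendsto (0 : X)
    have h1 : ∀ᶠ h : X in 𝓝 0, x + h ∈ t := htd ht
    have h2 : ∀ᶠ h : X in 𝓝 0, (K : ℝ) ^ p * ‖h‖ ^ (p - 1) < c := by
      have hcont : Tendsto (fun h : X => (K : ℝ) ^ p * ‖h‖ ^ (p - 1)) (𝓝 0) (𝓝 0) := by
        have : Continuous (fun h : X => (K : ℝ) ^ p * ‖h‖ ^ (p - 1)) :=
          continuous_const.mul (continuous_norm.rpow_const fun _ => Or.inr (by linarith))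
        have h0 : (K : ℝ) ^ p * ‖(0 : X)‖ ^ (p - 1) = 0 := by
          rw [norm_zero, Real.zero_rpow (by linarith), mul_zero]
        have h3 := this.tendsto (0 : X)
        rw [norm_zero, Real.zero_rpow (by linarith), mul_zero] at h3
        exact h3
      exact hcont.eventually_lt_const hc
    filter_upwards [h1, h2] with h hh1 hh2
    have hfh : ‖f (x + h)‖ ≤ (K : ℝ) * ‖h‖ := by
      have := hK.dist_le_mul (x + h) hh1 x hxt
      simpa [dist_eq_norm, hx] using this
    have hN : Nf f (x + h) ^ (p / 2) = ‖f (x + h)‖ ^ p := (norm_rpow_eq_Nf_rpow f _).symm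
    have hNx : Nf f x ^ (p / 2) = 0 := by
      rw [← norm_rpow_eq_Nf_rpow, hx, norm_zero, Real.zero_rpow (by linarith)]
    simp only [ContinuousLinearMap.zero_apply]
    rw [Real.norm_eq_abs]
    have hb : ‖f (x + h)‖ ^ p ≤ (K : ℝ) ^ p * ‖h‖ ^ (p - 1) * ‖h‖ := by
      calc ‖f (x + h)‖ ^ p ≤ ((K : ℝ) * ‖h‖) ^ p :=
            Real.rpow_le_rpow (norm_nonneg _) hfh (by linarith)
        _ = (K : ℝ) ^ p * ‖h‖ ^ p := Real.mul_rpow (NNReal.coe_nonneg K) (norm_nonneg _)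
        _ = (K : ℝ) ^ p * ‖h‖ ^ (p - 1) * ‖h‖ := by
            have hsplit : ‖h‖ ^ p = ‖h‖ ^ (p - 1) * ‖h‖ := by
              rcases eq_or_lt_of_le (norm_nonneg h) with h0 | h0
              · rw [← h0, Real.zero_rpow (by linarith), Real.zero_rpow (by linarith), zero_mul]
              · have h2 := (Real.rpow_add h0 (p - 1) 1).symm
                rw [Real.rpow_one] at h2
                rw [h2, sub_add_cancel]
            rw [hsplit]; ring
    have habs : |Nf f (x + h) ^ (p / 2) - Nf f x ^ (p / 2) - 0| = ‖f (x + h)‖ ^ p := by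
      rw [hNx, hN, sub_zero, sub_zero, abs_of_nonneg (Real.rpow_nonneg (norm_nonneg _) _)]
    rw [habs]
    exact hb.trans (mul_le_mul_of_nonneg_right hh2.le (norm_nonneg _))
  · -- nonzero case, chain rule
    have hNpos : 0 < Nf f x := by
      rw [Nf_eq]
      have : 0 < ‖f x‖ := norm_pos_iff.mpr hx
      positivity
    have hr : HasDerivAt (fun t : ℝ => t ^ (p / 2)) ((p / 2) * Nf f x ^ (p / 2 - 1)) (Nf f x) :=
      Real.hasDerivAt_rpow_const (Or.inl hNpos.ne')
    exact hr.comp_hasFDerivAt x (hasFDerivAt_Nf hf x)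

lemma continuous_DP (hp : 1 < p) (hf : ContDiff ℝ (⊤ : ℕ∞) f) : Continuous (DP f p) := by
  have hDf : Continuous (fderiv ℝ f) := hf.continuous_fderiv (by simp)
  have hDN := continuous_DN hf
  rw [continuous_iff_continuousAt]
  intro x
  by_cases hx : f x = 0
  · have hg : Continuous fun y => p * ‖f y‖ ^ (p - 1) * ‖fderiv ℝ f y‖ :=
      (continuous_const.mul ((continuous_norm.comp hf.continuous).rpow_const
        fun _ => Or.inr (by linarith))).mul hDf.norm
    have hg0 : p * ‖f x‖ ^ (p - 1) * ‖fderiv ℝ f x‖ = 0 := by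
      rw [hx, norm_zero, Real.zero_rpow (by linarith)]
      ring
    have key : Tendsto (DP f p) (𝓝 x) (𝓝 0) := by
      apply squeeze_zero_norm (fun y => DP_opNorm_le hp y)
      have h3 := hg.tendsto x
      rw [hg0] at h3
      exact h3
    unfold ContinuousAt
    rwa [DP_zero hx]
  · have hNpos : 0 < Nf f x := by
      rw [Nf_eq]
      have : 0 < ‖f x‖ := norm_pos_iff.mpr hx
      positivity
    exact (((continuous_Nf hf.continuous).continuousAt.rpow_const
      (Or.inl hNpos.ne')).const_mul _).smul hDN.continuousAt



abbrev Espace (k m : ℕ) : Type := EuclideanSpace ℝ (Fin k) × EuclideanSpace ℝ (Fin m)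

instance instHaarEspace (k m : ℕ) :
    Measure.IsAddHaarMeasure (volume : Measure (Espace k m)) := by
  rw [show (volume : Measure (Espace k m)) = Measure.prod volume volume from Measure.volume_eq_prod _ _]
  exact Measure.prod.instIsAddHaarMeasure _ _

variable {k m : ℕ}

lemma sum_apply_single (T : Espace k m →L[ℝ] ℝ) (y : EuclideanSpace ℝ (Fin k)) :
    ∑ i, y i * T (EuclideanSpace.single i 1, 0) = T (y, 0) := by
  classical
  have hrepr : ((y, 0) : Espace k m) =
      ∑ i, y i • ((EuclideanSpace.single i (1:ℝ), 0) : Espace k m) := by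
    refine Prod.ext ?_ ?_
    · ext j
      simp only [Prod.fst_sum, Prod.smul_mk]
      rw [WithLp.ofLp_sum, Finset.sum_apply]
      simp only [PiLp.smul_apply, EuclideanSpace.single_apply, smul_eq_mul, mul_ite, mul_one,
        mul_zero]
      rw [Finset.sum_ite_eq Finset.univ j y]
      simp
    · simp [Prod.snd_sum]
  rw [hrepr, map_sum]
  refine Finset.sum_congr rfl fun i _ => ?_
  have hpair : (y i • ((EuclideanSpace.single i (1:ℝ), 0) : Espace k m)) =
      ((y i • EuclideanSpace.single i 1, 0) : Espace k m) := by
    simp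
  rw [T.map_smul, smul_eq_mul]

lemma exists_eps {f : Espace k m → ℂ} (hsupp : HasCompactSupport f)
    (h0 : ∀ x : Espace k m, x ∈ tsupport f → x.1 ≠ 0) :
    ∃ ε > 0, ∀ x ∈ tsupport f, ε ≤ ‖x.1‖ := by
  rcases Set.eq_empty_or_nonempty (tsupport f) with he | hne
  · exact ⟨1, one_pos, fun x hx => by rw [he] at hx; exact absurd hx (Set.notMem_empty x)⟩
  · obtain ⟨x₀, hx₀, hmin⟩ := hsupp.exists_isMinOn hne
      ((continuous_norm.comp continuous_fst).continuousOn)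
    exact ⟨‖x₀.1‖, norm_pos_iff.mpr (h0 x₀ hx₀), fun x hx => hmin hx⟩

lemma cont_glue {ε : ℝ} (hε : 0 < ε) {h : Espace k m → ℝ}
    (hz : ∀ x : Espace k m, ‖x.1‖ < ε → h x = 0)
    (hc : ∀ x : Espace k m, x.1 ≠ 0 → ContinuousAt h x) : Continuous h := by
  rw [continuous_iff_continuousAt]
  intro x
  rcases lt_or_ge ‖x.1‖ ε with hx | hx
  · have hopen : IsOpen {y : Espace k m | ‖y.1‖ < ε} :=
      isOpen_lt (continuous_norm.comp continuous_fst) continuous_const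
    have hnh : {y : Espace k m | ‖y.1‖ < ε} ∈ 𝓝 x := hopen.mem_nhds hx
    have heq : h =ᶠ[𝓝 x] fun _ => 0 := by
      filter_upwards [hnh] with y hy
      exact hz y hy
    exact (continuousAt_const).congr heq.symm
  · refine hc x fun hy => ?_
    rw [hy] at hx
    simp at hx
    linarith

variable {k m : ℕ} {p : ℝ} {f : Espace k m → ℂ}

lemma hardy (hp : 1 < p) (hf : ContDiff ℝ (⊤ : ℕ∞) f) (hsupp : HasCompactSupport f)
    (h0 : ∀ x : Espace k m, x ∈ tsupport f → x.1 ≠ 0) :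
    |(k : ℝ) - p| * (∫ x, (‖f x‖ / ‖x.1‖) ^ p) ^ (1 / p) ≤
      p * (∫ x, (‖fderiv ℝ f x (x.1, 0)‖ / ‖x.1‖) ^ p) ^ (1 / p) := by
  classical
  have hp0 : (0 : ℝ) < p := lt_trans one_pos hp
  have hpq : p.HolderConjugate (p / (p - 1)) := Real.HolderConjugate.conjExponent hp
  set q : ℝ := p / (p - 1) with hqdef
  obtain ⟨ε, hε, hsep⟩ := exists_eps hsupp h0
  have hnmem : ∀ x : Espace k m, ‖x.1‖ < ε → x ∉ tsupport f := fun x hx hmem =>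
    absurd (hsep x hmem) (not_le.mpr hx)
  have hfz : ∀ x : Espace k m, ‖x.1‖ < ε → f x = 0 := fun x hx =>
    image_eq_zero_of_notMem_tsupport (hnmem x hx)
  have hfz0 : ∀ x : Espace k m, x.1 = 0 → f x = 0 := fun x hx =>
    hfz x (by rw [hx]; simpa using hε)
  have hDfc : Continuous (fderiv ℝ f) := hf.continuous_fderiv (by simp)
  have hDfz : ∀ x : Espace k m, ‖x.1‖ < ε → fderiv ℝ f x = 0 := by
    intro x hx
    by_contra h
    exact hnmem x hx (support_fderiv_subset ℝ (by simpa [Function.mem_support] using h))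
  have hDPzf : ∀ x : Espace k m, f x = 0 → DP f p x = 0 := fun x hx => DP_zero hx
  have hDPc : Continuous (DP f p) := continuous_DP hp hf
  -- definitions
  set P : Espace k m → ℝ := fun x => ‖f x‖ ^ p with hPdef
  set J : Fin k → (Espace k m →L[ℝ] ℝ) :=
    fun j => (EuclideanSpace.proj j).comp (ContinuousLinearMap.fst ℝ _ _) with hJdef
  have hJapp : ∀ (j : Fin k) (y : Espace k m), J j y = y.1 j := fun j y => rfl
  set Q : Espace k m → ℝ := fun x => ∑ j, x.1 j * x.1 j with hQdef
  set DQ : Espace k m → (Espace k m →L[ℝ] ℝ) :=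
    fun x => ∑ j, ((x.1 j) • J j + (x.1 j) • J j) with hDQdef
  set ρ : Espace k m → ℝ := fun x => Q x ^ (-(p / 2)) with hρdef
  set Dρ : Espace k m → (Espace k m →L[ℝ] ℝ) :=
    fun x => ((-(p / 2)) * Q x ^ (-(p / 2) - 1)) • DQ x with hDρdef
  set W : Fin k → Espace k m → ℝ := fun i x => ρ x * P x * x.1 i with hWdef
  set Di : Fin k → Espace k m → (Espace k m →L[ℝ] ℝ) :=
    fun i x => (ρ x * P x) • J i + (x.1 i) • ((ρ x) • DP f p x + (P x) • Dρ x) with hDidef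
  -- basic facts about Q and ρ
  have hQeq : ∀ x : Espace k m, Q x = ‖x.1‖ ^ (2 : ℕ) := by
    intro x
    rw [hQdef]
    rw [EuclideanSpace.norm_eq, Real.sq_sqrt (by positivity)]
    refine Finset.sum_congr rfl fun j _ => ?_
    rw [Real.norm_eq_abs, sq_abs, pow_two]
  have hQnn : ∀ x : Espace k m, 0 ≤ Q x := fun x => by rw [hQeq]; positivity
  have hQpos : ∀ x : Espace k m, x.1 ≠ 0 → 0 < Q x := by
    intro x hx
    rw [hQeq]
    have : 0 < ‖x.1‖ := norm_pos_iff.mpr hx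
    positivity
  have hQz : ∀ x : Espace k m, x.1 = 0 → Q x = 0 := fun x hx => by
    rw [hQeq, hx]; simp
  have hQc : Continuous Q := by
    rw [hQdef]
    exact continuous_finset_sum _ fun j _ =>
      ((EuclideanSpace.proj j).continuous.comp continuous_fst).mul
        ((EuclideanSpace.proj j).continuous.comp continuous_fst)
  have hcoord : ∀ j : Fin k, Continuous fun x : Espace k m => x.1 j := fun j =>
    (EuclideanSpace.proj j).continuous.comp continuous_fst
  have hQder : ∀ x : Espace k m, HasFDerivAt Q (DQ x) x := by
    intro x
    rw [hQdef, hDQdef]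
    refine HasFDerivAt.fun_sum fun j _ => ?_
    exact (J j).hasFDerivAt.mul (J j).hasFDerivAt
  have hDQapp : ∀ (x w : Espace k m), DQ x w = ∑ j, 2 * (x.1 j * w.1 j) := by
    intro x w
    rw [hDQdef]
    simp [ContinuousLinearMap.sum_apply, hJapp]
    ring_nf
  have hDQself : ∀ x : Espace k m, DQ x (x.1, 0) = 2 * Q x := by
    intro x
    rw [hDQapp, hQdef]
    rw [Finset.mul_sum]
  have hDQc : Continuous DQ := by
    rw [hDQdef]
    exact continuous_finset_sum _ fun j _ =>
      (((hcoord j).smul continuous_const).add ((hcoord j).smul continuous_const))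
  -- P facts
  have hPc : Continuous P := by
    rw [hPdef]
    exact (continuous_norm.comp hf.continuous).rpow_const fun _ => Or.inr hp0.le
  have hPzf : ∀ x : Espace k m, f x = 0 → P x = 0 := by
    intro x hx
    rw [hPdef]
    simp only [hx, norm_zero]
    exact Real.zero_rpow (ne_of_gt hp0)
  have hPz : ∀ x : Espace k m, ‖x.1‖ < ε → P x = 0 := fun x hx => hPzf x (hfz x hx)
  have hDPz : ∀ x : Espace k m, ‖x.1‖ < ε → DP f p x = 0 := fun x hx => hDPzf x (hfz x hx)
  -- ρ facts
  have hρz : ∀ x : Espace k m, x.1 = 0 → ρ x = 0 := by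
    intro x hx
    simp only [hρdef]
    rw [hQz x hx]
    exact Real.zero_rpow (by intro h; nlinarith [hp0] : -(p / 2) ≠ 0)
  have hρnn : ∀ x : Espace k m, 0 ≤ ρ x := fun x => Real.rpow_nonneg (hQnn x) _
  have hρcat : ∀ x : Espace k m, x.1 ≠ 0 → ContinuousAt ρ x := by
    intro x hx
    rw [hρdef]
    exact hQc.continuousAt.rpow_const (Or.inl (ne_of_gt (hQpos x hx)))
  have hρder : ∀ x : Espace k m, x.1 ≠ 0 → HasFDerivAt ρ (Dρ x) x := by
    intro x hx
    rw [hρdef, hDρdef]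
    have hr : HasDerivAt (fun t : ℝ => t ^ (-(p / 2)))
        ((-(p / 2)) * Q x ^ (-(p / 2) - 1)) (Q x) :=
      Real.hasDerivAt_rpow_const (Or.inl (ne_of_gt (hQpos x hx)))
    exact hr.comp_hasFDerivAt x (hQder x)
  -- derivative of W
  have hWder : ∀ (i : Fin k) (x : Espace k m), HasFDerivAt (W i) (Di i x) x := by
    intro i x
    rcases lt_or_ge ‖x.1‖ ε with hx | hx
    · -- W vanishes near x
      have hopen : IsOpen {y : Espace k m | ‖y.1‖ < ε} :=
        isOpen_lt (continuous_norm.comp continuous_fst) continuous_const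
      have heq : W i =ᶠ[𝓝 x] fun _ => (0 : ℝ) := by
        filter_upwards [hopen.mem_nhds hx] with y hy
        rw [hWdef]
        simp [hPz y hy]
      have hz : HasFDerivAt (W i) 0 x :=
        (hasFDerivAt_const (𝕜 := ℝ) (0 : ℝ) x).congr_of_eventuallyEq heq
      have hDi0 : Di i x = 0 := by
        rw [hDidef]
        simp [hPz x hx, hDPz x hx]
      rwa [hDi0]
    · have hx1 : x.1 ≠ 0 := fun h => by
        rw [h] at hx; simp at hx; linarith
      have h1 : HasFDerivAt (fun y : Espace k m => ρ y * P y)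
          ((ρ x) • DP f p x + (P x) • Dρ x) x :=
        (hρder x hx1).mul (hasFDerivAt_norm_rpow hp hf x)
      have h2 : HasFDerivAt (fun y : Espace k m => y.1 i) (J i) x := (J i).hasFDerivAt
      have h3 := h1.mul h2
      rw [hWdef, hDidef]
      exact h3
  -- value of the divergence sum
  have hsum : ∀ x : Espace k m, (∑ i, Di i x (EuclideanSpace.single i 1, 0)) =
      ((k : ℝ) - p) * (ρ x * P x) + ρ x * (DP f p x (x.1, 0)) := by
    intro x
    rcases lt_or_ge ‖x.1‖ ε with hx | hx
    · have hP0 := hPz x hx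
      have hDP0 := hDPz x hx
      rw [hDidef]
      simp [hP0, hDP0]
    · have hx1 : x.1 ≠ 0 := fun h => by
        rw [h] at hx; simp at hx; linarith
      have hQx := hQpos x hx1
      have happ : ∀ i : Fin k, Di i x (EuclideanSpace.single i 1, 0) =
          ρ x * P x + x.1 i * (ρ x * DP f p x (EuclideanSpace.single i 1, 0)
            + P x * Dρ x (EuclideanSpace.single i 1, 0)) := by
        intro i
        rw [hDidef]
        have hJi : J i ((EuclideanSpace.single i 1 : EuclideanSpace ℝ (Fin k)), 0) = 1 := by
          rw [hJapp]
          simp [EuclideanSpace.single_apply]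
        simp only [ContinuousLinearMap.add_apply, ContinuousLinearMap.coe_smul',
          Pi.smul_apply, smul_eq_mul, hJi, mul_one]
      rw [Finset.sum_congr rfl fun i _ => happ i]
      rw [Finset.sum_add_distrib, Finset.sum_const, Finset.card_univ, Fintype.card_fin]
      have hsplit : ∀ i : Fin k, x.1 i * (ρ x * DP f p x (EuclideanSpace.single i 1, 0)
            + P x * Dρ x (EuclideanSpace.single i 1, 0)) =
          ρ x * (x.1 i * DP f p x (EuclideanSpace.single i 1, 0))
            + P x * (x.1 i * Dρ x (EuclideanSpace.single i 1, 0)) := by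
        intro i; ring
      rw [Finset.sum_congr rfl fun i _ => hsplit i, Finset.sum_add_distrib,
        ← Finset.mul_sum, ← Finset.mul_sum]
      rw [sum_apply_single (DP f p x) x.1]
      have hDρsum : ∑ i, x.1 i * Dρ x (EuclideanSpace.single i 1, 0) = Dρ x (x.1, 0) := by
        exact sum_apply_single (Dρ x) x.1
      rw [hDρsum]
      have hDρself : Dρ x (x.1, 0) = -p * Q x ^ (-(p / 2) - 1) * Q x := by
        rw [hDρdef]
        simp only [ContinuousLinearMap.coe_smul', Pi.smul_apply, smul_eq_mul]
        rw [hDQself]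
        ring
      rw [hDρself]
      have hQpow : Q x ^ (-(p / 2) - 1) * Q x = ρ x := by
        simp only [hρdef]
        rw [← Real.rpow_add_one (ne_of_gt hQx) (-(p / 2) - 1)]
        congr 1
        ring
      have : P x * (-p * Q x ^ (-(p / 2) - 1) * Q x) = -p * (ρ x * P x) := by
        rw [show P x * (-p * Q x ^ (-(p / 2) - 1) * Q x)
            = -p * ((Q x ^ (-(p / 2) - 1) * Q x) * P x) by ring, hQpow]
      rw [this]
      push_cast
      ring
  -- continuity and integrability
  have hWcont : ∀ i : Fin k, Continuous (W i) := by
    intro i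
    refine cont_glue hε (fun x hx => ?_) (fun x hx => ?_)
    · rw [hWdef]; simp [hPz x hx]
    · rw [hWdef]
      exact (((hρcat x hx).mul hPc.continuousAt).mul (hcoord i).continuousAt)
  have hWsupp : ∀ i : Fin k, HasCompactSupport (W i) := by
    intro i
    refine HasCompactSupport.intro hsupp fun x hx => ?_
    rw [hWdef]
    simp [hPzf x (image_eq_zero_of_notMem_tsupport hx)]
  have hDPev : Continuous fun x : Espace k m => DP f p x (x.1, 0) := by
    have h1 : Continuous fun x : Espace k m =>
        ((DP f p x : Espace k m →L[ℝ] ℝ), (x.1, (0 : EuclideanSpace ℝ (Fin m)))) :=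
      hDPc.prodMk (continuous_fst.prodMk continuous_const)
    exact isBoundedBilinearMap_apply.continuous.comp h1
  have hdicont : ∀ i : Fin k,
      Continuous fun x : Espace k m => Di i x (EuclideanSpace.single i 1, 0) := by
    intro i
    refine cont_glue hε (fun x hx => ?_) (fun x hx => ?_)
    · rw [hDidef]
      simp [hPz x hx, hDPz x hx]
    · rw [hDidef]
      have hDPi : Continuous fun x : Espace k m =>
          DP f p x (EuclideanSpace.single i 1, 0) :=
        isBoundedBilinearMap_apply.continuous.comp (hDPc.prodMk continuous_const)
      have hDQi : Continuous fun x : Espace k m =>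
          DQ x (EuclideanSpace.single i 1, 0) :=
        isBoundedBilinearMap_apply.continuous.comp (hDQc.prodMk continuous_const)
      have hDρi : ContinuousAt (fun x : Espace k m =>
          Dρ x (EuclideanSpace.single i 1, 0)) x := by
        rw [hDρdef]
        simp only [ContinuousLinearMap.coe_smul', Pi.smul_apply, smul_eq_mul]
        exact ((continuousAt_const.mul (hQc.continuousAt.rpow_const
          (Or.inl (ne_of_gt (hQpos x hx))))).mul hDQi.continuousAt)
      simp only [ContinuousLinearMap.add_apply, ContinuousLinearMap.coe_smul',
        Pi.smul_apply, smul_eq_mul]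
      exact ((((hρcat x hx).mul hPc.continuousAt).mul continuousAt_const).add
        (((hcoord i).continuousAt).mul
          (((hρcat x hx).mul hDPi.continuousAt).add
            (hPc.continuousAt.mul hDρi))))
  have hdisupp : ∀ i : Fin k,
      HasCompactSupport fun x : Espace k m => Di i x (EuclideanSpace.single i 1, 0) := by
    intro i
    refine HasCompactSupport.intro hsupp fun x hx => ?_
    have hfx : f x = 0 := image_eq_zero_of_notMem_tsupport hx
    rw [hDidef]
    simp [hPzf x hfx, hDPzf x hfx]
  have hdiint : ∀ i : Fin k,
      Integrable (fun x : Espace k m => Di i x (EuclideanSpace.single i 1, 0)) volume :=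
    fun i => (hdicont i).integrable_of_hasCompactSupport (hdisupp i)
  -- integration by parts: each directional derivative integrates to zero
  have IBP : ∀ i : Fin k, ∫ x : Espace k m, Di i x (EuclideanSpace.single i 1, 0) = 0 := by
    intro i
    have hg : ∀ x : Espace k m, HasFDerivAt (fun _ : Espace k m => (1 : ℝ))
        (0 : Espace k m →L[ℝ] ℝ) x := fun x => hasFDerivAt_const 1 x
    have hint1 : Integrable (fun x : Espace k m =>
        (ContinuousLinearMap.mul ℝ ℝ) (Di i x (EuclideanSpace.single i 1, 0))
          ((fun _ : Espace k m => (1 : ℝ)) x)) volume := by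
      simpa using (hdiint i).mul_const (1 : ℝ)
    have hint2 : Integrable (fun x : Espace k m =>
        (ContinuousLinearMap.mul ℝ ℝ) (W i x)
          ((0 : Espace k m →L[ℝ] ℝ) (EuclideanSpace.single i 1, 0))) volume := by
      simpa using (integrable_zero (Espace k m) ℝ (volume : Measure (Espace k m)))
    have hint3 : Integrable (fun x : Espace k m =>
        (ContinuousLinearMap.mul ℝ ℝ) (W i x) ((fun _ : Espace k m => (1 : ℝ)) x)) volume := by
      simpa using ((hWcont i).integrable_of_hasCompactSupport (hWsupp i)).mul_const (1 : ℝ)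
    have h := integral_bilinear_hasFDerivAt_right_eq_neg_left_of_integrable
      (μ := (volume : Measure (Espace k m))) (B := ContinuousLinearMap.mul ℝ ℝ)
      (v := ((EuclideanSpace.single i 1 : EuclideanSpace ℝ (Fin k)), 0))
      hint1 hint2 hint3 (fun x _ => hWder i x) (fun x _ => hg x)
    simp only [ContinuousLinearMap.zero_apply, ContinuousLinearMap.mul_apply', mul_zero,
      mul_one, integral_zero] at h
    linarith [h]
  -- integrability of the two pieces
  have hρPcont : Continuous fun x : Espace k m => ρ x * P x := by
    refine cont_glue hε (fun x hx => ?_) (fun x hx => ?_)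
    · simp [hPz x hx]
    · exact (hρcat x hx).mul hPc.continuousAt
  have hρPsupp : HasCompactSupport fun x : Espace k m => ρ x * P x := by
    refine HasCompactSupport.intro hsupp fun x hx => ?_
    simp [hPzf x (image_eq_zero_of_notMem_tsupport hx)]
  have hρPint : Integrable (fun x : Espace k m => ρ x * P x) volume :=
    hρPcont.integrable_of_hasCompactSupport hρPsupp
  have hρDPcont : Continuous fun x : Espace k m => ρ x * DP f p x (x.1, 0) := by
    refine cont_glue hε (fun x hx => ?_) (fun x hx => ?_)
    · simp [hDPz x hx]
    · exact (hρcat x hx).mul hDPev.continuousAt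
  have hρDPsupp : HasCompactSupport fun x : Espace k m => ρ x * DP f p x (x.1, 0) := by
    refine HasCompactSupport.intro hsupp fun x hx => ?_
    simp [hDPzf x (image_eq_zero_of_notMem_tsupport hx)]
  have hρDPint : Integrable (fun x : Espace k m => ρ x * DP f p x (x.1, 0)) volume :=
    hρDPcont.integrable_of_hasCompactSupport hρDPsupp
  -- the key integral identity
  have hzero : ∫ x : Espace k m,
      (((k : ℝ) - p) * (ρ x * P x) + ρ x * DP f p x (x.1, 0)) = 0 := by
    have h1 : ∫ x : Espace k m,
        (((k : ℝ) - p) * (ρ x * P x) + ρ x * DP f p x (x.1, 0))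
        = ∫ x : Espace k m, ∑ i, Di i x (EuclideanSpace.single i 1, 0) :=
      integral_congr_ae (Eventually.of_forall fun x => (hsum x).symm)
    rw [h1, integral_finset_sum _ fun i _ => hdiint i]
    simp [IBP]
  have hkey : ((k : ℝ) - p) * (∫ x : Espace k m, ρ x * P x)
      = - ∫ x : Espace k m, ρ x * DP f p x (x.1, 0) := by
    rw [integral_add (hρPint.const_mul _) hρDPint, integral_const_mul] at hzero
    linarith [hzero]
  -- identification of ∫ ρ P with the Hardy integrand
  have hρval : ∀ x : Espace k m, x.1 ≠ 0 → ρ x = (‖x.1‖ ^ p)⁻¹ := by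
    intro x hx
    simp only [hρdef]
    rw [hQeq, ← Real.rpow_natCast ‖x.1‖ 2, ← Real.rpow_mul (norm_nonneg _),
      show ((2 : ℕ) : ℝ) * (-(p / 2)) = -p by push_cast; ring,
      Real.rpow_neg (norm_nonneg _)]
  have hρPeq : ∀ x : Espace k m, ρ x * P x = (‖f x‖ / ‖x.1‖) ^ p := by
    intro x
    by_cases hx : x.1 = 0
    · rw [hρz x hx, zero_mul, hfz0 x hx, hx]
      simp [Real.zero_rpow (ne_of_gt hp0)]
    · rw [hρval x hx, hPdef, Real.div_rpow (norm_nonneg _) (norm_nonneg _)]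
      rw [div_eq_mul_inv]
      ring
  have hI1cong : (∫ x : Espace k m, ρ x * P x) = ∫ x : Espace k m, (‖f x‖ / ‖x.1‖) ^ p :=
    integral_congr_ae (Eventually.of_forall fun x => hρPeq x)
  -- pointwise bound
  have hGA : ∀ x : Espace k m, |ρ x * DP f p x (x.1, 0)| ≤
      p * ((‖f x‖ / ‖x.1‖) ^ (p - 1) * (‖fderiv ℝ f x (x.1, 0)‖ / ‖x.1‖)) := by
    intro x
    by_cases hx : x.1 = 0
    · rw [hρz x hx, zero_mul, abs_zero]
      have h1 : 0 ≤ (‖f x‖ / ‖x.1‖) ^ (p - 1) :=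
        Real.rpow_nonneg (div_nonneg (norm_nonneg _) (norm_nonneg _)) _
      have h2 : 0 ≤ ‖fderiv ℝ f x (x.1, 0)‖ / ‖x.1‖ :=
        div_nonneg (norm_nonneg _) (norm_nonneg _)
      positivity
    · have hr : 0 < ‖x.1‖ := norm_pos_iff.mpr hx
      have hrp : (0 : ℝ) < ‖x.1‖ ^ p := Real.rpow_pos_of_pos hr _
      have hrp1 : (0 : ℝ) < ‖x.1‖ ^ (p - 1) := Real.rpow_pos_of_pos hr _
      have hbd := DP_apply_le (f := f) hp x ((x.1, 0) : Espace k m)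
      have h1 : |ρ x * DP f p x (x.1, 0)| ≤ ρ x * (p * ‖f x‖ ^ (p - 1) * ‖fderiv ℝ f x (x.1, 0)‖) := by
        rw [abs_mul, abs_of_nonneg (hρnn x)]
        exact mul_le_mul_of_nonneg_left hbd (hρnn x)
      refine h1.trans (le_of_eq ?_)
      have hrr : ‖x.1‖ ^ (p - 1) * ‖x.1‖ = ‖x.1‖ ^ p := by
        rw [← Real.rpow_add_one (ne_of_gt hr) (p - 1), sub_add_cancel]
      rw [hρval x hx, Real.div_rpow (norm_nonneg _) (norm_nonneg _), ← hrr]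
      have h1' : ‖x.1‖ ^ (p - 1) ≠ 0 := ne_of_gt hrp1
      have h2' : ‖x.1‖ ≠ 0 := ne_of_gt hr
      field_simp
  -- Hölder inequality for the right-hand side
  set G1 : Espace k m → ℝ := fun x => (‖f x‖ / ‖x.1‖) ^ (p - 1) with hG1def
  set A : Espace k m → ℝ := fun x => ‖fderiv ℝ f x (x.1, 0)‖ / ‖x.1‖ with hAdef
  have hGc : Continuous fun x : Espace k m => ‖f x‖ / ‖x.1‖ := by
    refine cont_glue hε (fun x hx => ?_) (fun x hx => ?_)
    · rw [hfz x hx]; simp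
    · exact ((continuous_norm.comp hf.continuous).continuousAt).div
        ((continuous_norm.comp continuous_fst).continuousAt)
        (norm_ne_zero_iff.mpr hx)
  have hG1c : Continuous G1 := by
    rw [hG1def]
    exact hGc.rpow_const fun _ => Or.inr (by linarith)
  have hG1supp : HasCompactSupport G1 := by
    refine HasCompactSupport.intro hsupp fun x hx => ?_
    rw [hG1def]
    simp only [image_eq_zero_of_notMem_tsupport hx, norm_zero, zero_div]
    exact Real.zero_rpow (by linarith)
  have hAc : Continuous A := by
    rw [hAdef]
    refine cont_glue hε (fun x hx => ?_) (fun x hx => ?_)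
    · rw [hDfz x hx]; simp
    · have hnum : Continuous fun x : Espace k m => ‖fderiv ℝ f x (x.1, 0)‖ := by
        have h1 : Continuous fun x : Espace k m =>
            ((fderiv ℝ f x : Espace k m →L[ℝ] ℂ), ((x.1, 0) : Espace k m)) :=
          hDfc.prodMk (continuous_fst.prodMk continuous_const)
        exact (isBoundedBilinearMap_apply.continuous.comp h1).norm
      exact (hnum.continuousAt).div ((continuous_norm.comp continuous_fst).continuousAt)
        (norm_ne_zero_iff.mpr hx)
  have hAsupp : HasCompactSupport A := by
    refine HasCompactSupport.intro hsupp fun x hx => ?_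
    rw [hAdef]
    have : fderiv ℝ f x = 0 := by
      by_contra h
      exact hx (support_fderiv_subset ℝ (by simpa [Function.mem_support] using h))
    simp [this]
  have hHold1 : ∫ x : Espace k m, G1 x * A x ≤
      (∫ x : Espace k m, (‖f x‖ / ‖x.1‖) ^ p) ^ (1 / q) *
        (∫ x : Espace k m, A x ^ p) ^ (1 / p) := by
    have h := integral_mul_le_Lp_mul_Lq_of_nonneg (μ := (volume : Measure (Espace k m)))
      hpq.symm
      (Eventually.of_forall fun x => Real.rpow_nonneg
        (div_nonneg (norm_nonneg _) (norm_nonneg _)) _ :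
        0 ≤ᵐ[(volume : Measure (Espace k m))] G1)
      (Eventually.of_forall fun x => div_nonneg (norm_nonneg _) (norm_nonneg _) :
        0 ≤ᵐ[(volume : Measure (Espace k m))] A)
      (hG1c.memLp_of_hasCompactSupport hG1supp)
      (hAc.memLp_of_hasCompactSupport hAsupp)
    have hcong : (∫ x : Espace k m, G1 x ^ q) = ∫ x : Espace k m, (‖f x‖ / ‖x.1‖) ^ p := by
      refine integral_congr_ae (Eventually.of_forall fun x => ?_)
      simp only [hG1def]
      rw [← Real.rpow_mul (div_nonneg (norm_nonneg _) (norm_nonneg _))]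
      congr 1
      rw [hqdef]
      have hp1 : p - 1 ≠ 0 := by linarith
      field_simp
    rwa [hcong] at h
  -- assemble Hardy's inequality
  set I1 : ℝ := ∫ x : Espace k m, (‖f x‖ / ‖x.1‖) ^ p with hI1def
  set I2 : ℝ := ∫ x : Espace k m, A x ^ p with hI2def
  have hI1nn : 0 ≤ I1 := integral_nonneg fun x =>
    Real.rpow_nonneg (div_nonneg (norm_nonneg _) (norm_nonneg _)) _
  have hI2nn : 0 ≤ I2 := integral_nonneg fun x =>
    Real.rpow_nonneg (div_nonneg (norm_nonneg _) (norm_nonneg _)) _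
  have hGAint : Integrable (fun x : Espace k m => p * (G1 x * A x)) volume := by
    exact (((hG1c.mul hAc).integrable_of_hasCompactSupport
      (hG1supp.mul_right)).const_mul p)
  have hH : |(k : ℝ) - p| * I1 ≤ p * (I1 ^ (1 / q) * I2 ^ (1 / p)) := by
    have e1 : |(k : ℝ) - p| * I1 = |((k : ℝ) - p) * (∫ x : Espace k m, ρ x * P x)| := by
      rw [hI1cong, abs_mul, abs_of_nonneg hI1nn]
    have e2 : |((k : ℝ) - p) * (∫ x : Espace k m, ρ x * P x)|
        = |∫ x : Espace k m, ρ x * DP f p x (x.1, 0)| := by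
      rw [hkey, abs_neg]
    have e3 : |∫ x : Espace k m, ρ x * DP f p x (x.1, 0)|
        ≤ ∫ x : Espace k m, |ρ x * DP f p x (x.1, 0)| := by
      simpa only [Real.norm_eq_abs] using
        norm_integral_le_integral_norm (μ := (volume : Measure (Espace k m)))
          (fun x : Espace k m => ρ x * DP f p x (x.1, 0))
    have e4 : ∫ x : Espace k m, |ρ x * DP f p x (x.1, 0)|
        ≤ ∫ x : Espace k m, p * (G1 x * A x) := by
      refine integral_mono hρDPint.abs hGAint ?_
      intro x
      have := hGA x
      simpa [hG1def, hAdef, mul_assoc] using this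
    have e5 : ∫ x : Espace k m, p * (G1 x * A x) = p * ∫ x : Espace k m, G1 x * A x :=
      integral_const_mul _ _
    calc |(k : ℝ) - p| * I1 = |((k : ℝ) - p) * (∫ x : Espace k m, ρ x * P x)| := e1
      _ = |∫ x : Espace k m, ρ x * DP f p x (x.1, 0)| := e2
      _ ≤ ∫ x : Espace k m, |ρ x * DP f p x (x.1, 0)| := e3
      _ ≤ ∫ x : Espace k m, p * (G1 x * A x) := e4
      _ = p * ∫ x : Espace k m, G1 x * A x := e5
      _ ≤ p * (I1 ^ (1 / q) * I2 ^ (1 / p)) :=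
          mul_le_mul_of_nonneg_left hHold1 hp0.le
  rcases eq_or_lt_of_le hI1nn with hI10 | hI1pos
  · rw [← hI10, Real.zero_rpow (by positivity : (1:ℝ)/p ≠ 0), mul_zero]
    positivity
  · have hsplit : I1 = I1 ^ (1 / q) * I1 ^ (1 / p) := by
      rw [← Real.rpow_add hI1pos]
      rw [show 1 / q + 1 / p = 1 by
        have h := hpq.inv_add_inv_eq_one
        rw [one_div, one_div]
        linarith]
      exact (Real.rpow_one I1).symm
    have h3 : (|(k : ℝ) - p| * I1 ^ (1 / p)) * I1 ^ (1 / q)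
        ≤ (p * I2 ^ (1 / p)) * I1 ^ (1 / q) := by
      calc (|(k : ℝ) - p| * I1 ^ (1 / p)) * I1 ^ (1 / q)
          = |(k : ℝ) - p| * (I1 ^ (1 / q) * I1 ^ (1 / p)) := by ring
        _ = |(k : ℝ) - p| * I1 := by rw [← hsplit]
        _ ≤ p * (I1 ^ (1 / q) * I2 ^ (1 / p)) := hH
        _ = (p * I2 ^ (1 / p)) * I1 ^ (1 / q) := by ring
    exact le_of_mul_le_mul_right h3 (Real.rpow_pos_of_pos hI1pos _)


end CylHPW

open CylHPW in
/-- Cylindrical Heisenberg–Pauli–Weyl uncertainty principle: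
`|(k−p)/p| ∫|f|² ≤ (∫ |x'·∇_k f/|x'||^p)^{1/p} (∫ |x'|^{p'} |f|^{p'})^{1/p'}`, `p' = p/(p−1)`. -/
theorem cylindrical_HPW (k m n : ℕ) (hk : 1 ≤ k) (hn : k + m = n) (p : ℝ) (hp : 1 < p)
    (hkp : (k : ℝ) ≠ p)
    (f : EuclideanSpace ℝ (Fin k) × EuclideanSpace ℝ (Fin m) → ℂ)
    (hf : ContDiff ℝ (⊤ : ℕ∞) f) (hsupp : HasCompactSupport f)
    (h0 : ∀ x : EuclideanSpace ℝ (Fin k) × EuclideanSpace ℝ (Fin m),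
      x ∈ tsupport f → x.1 ≠ 0) :
    |((k : ℝ) - p) / p| * ∫ x, ‖f x‖ ^ (2 : ℝ) ≤
      (∫ x, (‖fderiv ℝ f x (x.1, 0)‖ / ‖x.1‖) ^ p) ^ (1 / p) *
      (∫ x, ‖x.1‖ ^ (p / (p - 1)) * ‖f x‖ ^ (p / (p - 1))) ^ (1 / (p / (p - 1))) := by
  classical
  have hp0 : (0 : ℝ) < p := lt_trans one_pos hp
  have hpq : p.HolderConjugate (p / (p - 1)) := Real.HolderConjugate.conjExponent hp
  obtain ⟨ε, hε, hsep⟩ := exists_eps hsupp h0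
  have hfz : ∀ x : Espace k m, ‖x.1‖ < ε → f x = 0 := fun x hx =>
    image_eq_zero_of_notMem_tsupport fun hmem => absurd (hsep x hmem) (not_le.mpr hx)
  have hfz0 : ∀ x : Espace k m, x.1 = 0 → f x = 0 := fun x hx =>
    hfz x (by rw [hx]; simpa using hε)
  -- continuity and compact support of the two Hölder factors
  have hGc : Continuous fun x : Espace k m => ‖f x‖ / ‖x.1‖ := by
    refine cont_glue hε (fun x hx => ?_) (fun x hx => ?_)
    · rw [hfz x hx]; simp
    · exact ((continuous_norm.comp hf.continuous).continuousAt).div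
        ((continuous_norm.comp continuous_fst).continuousAt)
        (norm_ne_zero_iff.mpr hx)
  have hGsupp : HasCompactSupport fun x : Espace k m => ‖f x‖ / ‖x.1‖ := by
    refine HasCompactSupport.intro hsupp fun x hx => ?_
    rw [image_eq_zero_of_notMem_tsupport hx]
    simp
  have hBc : Continuous fun x : Espace k m => ‖x.1‖ * ‖f x‖ :=
    (continuous_fst.norm).mul (hf.continuous.norm)
  have hBsupp : HasCompactSupport fun x : Espace k m => ‖x.1‖ * ‖f x‖ := by
    refine HasCompactSupport.intro hsupp fun x hx => ?_
    rw [image_eq_zero_of_notMem_tsupport hx]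
    simp
  -- pointwise factorization of ‖f‖²
  have hpoint : ∀ x : Espace k m,
      ‖f x‖ ^ (2 : ℝ) = (‖f x‖ / ‖x.1‖) * (‖x.1‖ * ‖f x‖) := by
    intro x
    by_cases hx : x.1 = 0
    · rw [hfz0 x hx]
      simp [Real.zero_rpow (two_ne_zero)]
    · have hr : ‖x.1‖ ≠ 0 := norm_ne_zero_iff.mpr hx
      rw [show ((2 : ℝ) : ℝ) = ((2 : ℕ) : ℝ) by norm_num, Real.rpow_natCast, pow_two]
      field_simp
  -- Hölder's inequality
  have hH2 : ∫ x : Espace k m, ‖f x‖ ^ (2 : ℝ) ≤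
      (∫ x : Espace k m, (‖f x‖ / ‖x.1‖) ^ p) ^ (1 / p) *
      (∫ x : Espace k m, ‖x.1‖ ^ (p / (p - 1)) * ‖f x‖ ^ (p / (p - 1))) ^ (1 / (p / (p - 1))) := by
    have h := integral_mul_le_Lp_mul_Lq_of_nonneg (μ := (volume : Measure (Espace k m))) hpq
      (Eventually.of_forall fun x => div_nonneg (norm_nonneg _) (norm_nonneg _) :
        0 ≤ᵐ[(volume : Measure (Espace k m))] fun x : Espace k m => ‖f x‖ / ‖x.1‖)
      (Eventually.of_forall fun x => mul_nonneg (norm_nonneg _) (norm_nonneg _) :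
        0 ≤ᵐ[(volume : Measure (Espace k m))] fun x : Espace k m => ‖x.1‖ * ‖f x‖)
      (hGc.memLp_of_hasCompactSupport hGsupp)
      (hBc.memLp_of_hasCompactSupport hBsupp)
    have e1 : ∫ x : Espace k m, (‖f x‖ / ‖x.1‖) * (‖x.1‖ * ‖f x‖)
        = ∫ x : Espace k m, ‖f x‖ ^ (2 : ℝ) :=
      integral_congr_ae (Eventually.of_forall fun x => (hpoint x).symm)
    have e2 : ∫ x : Espace k m, (‖x.1‖ * ‖f x‖) ^ (p / (p - 1))
        = ∫ x : Espace k m, ‖x.1‖ ^ (p / (p - 1)) * ‖f x‖ ^ (p / (p - 1)) :=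
      integral_congr_ae (Eventually.of_forall fun x =>
        Real.mul_rpow (norm_nonneg _) (norm_nonneg _))
    rw [e1, e2] at h
    exact h
  have hhardy := hardy hp hf hsupp h0
  have hI2nn : 0 ≤ ∫ x : Espace k m, (‖fderiv ℝ f x (x.1, 0)‖ / ‖x.1‖) ^ p :=
    integral_nonneg fun x => Real.rpow_nonneg (div_nonneg (norm_nonneg _) (norm_nonneg _)) _
  have hI3nn : 0 ≤ ∫ x : Espace k m, ‖x.1‖ ^ (p / (p - 1)) * ‖f x‖ ^ (p / (p - 1)) :=
    integral_nonneg fun x => mul_nonneg (Real.rpow_nonneg (norm_nonneg _) _)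
      (Real.rpow_nonneg (norm_nonneg _) _)
  set I1 : ℝ := ∫ x : Espace k m, (‖f x‖ / ‖x.1‖) ^ p with hI1def
  set I2 : ℝ := ∫ x : Espace k m, (‖fderiv ℝ f x (x.1, 0)‖ / ‖x.1‖) ^ p with hI2def
  set I3 : ℝ := ∫ x : Espace k m, ‖x.1‖ ^ (p / (p - 1)) * ‖f x‖ ^ (p / (p - 1)) with hI3def
  have hI1nn : 0 ≤ I1 := integral_nonneg fun x =>
    Real.rpow_nonneg (div_nonneg (norm_nonneg _) (norm_nonneg _)) _
  have hI3pnn : 0 ≤ I3 ^ (1 / (p / (p - 1))) := Real.rpow_nonneg hI3nn _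
  calc |((k : ℝ) - p) / p| * ∫ x : Espace k m, ‖f x‖ ^ (2 : ℝ)
      = (|(k : ℝ) - p| / p) * ∫ x : Espace k m, ‖f x‖ ^ (2 : ℝ) := by
        rw [abs_div, abs_of_pos hp0]
    _ ≤ (|(k : ℝ) - p| / p) * (I1 ^ (1 / p) * I3 ^ (1 / (p / (p - 1)))) := by
        refine mul_le_mul_of_nonneg_left hH2 ?_
        positivity
    _ = (|(k : ℝ) - p| * I1 ^ (1 / p)) * I3 ^ (1 / (p / (p - 1))) / p := by ring
    _ ≤ (p * I2 ^ (1 / p)) * I3 ^ (1 / (p / (p - 1))) / p := by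
        have h := mul_le_mul_of_nonneg_right hhardy hI3pnn
        exact div_le_div_of_nonneg_right h hp0.le
    _ = I2 ^ (1 / p) * I3 ^ (1 / (p / (p - 1))) := by
        field_simp
end
end
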